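/- arXiv:0802.2723 — 11 statements merged into one kernel-verified Lean document; each statement's English description precedes it below -/
import Mathlib

section
/- Let G be a finite group with a shift structure ({X_j}, Y_0, φ) of depth ℓ. Then for any two cosets s, s' ∈ G/X_0 there exist elements g_1, …, g_ℓ ∈ G such that g_1 X_0 = s, φ(g_i Y_0) = g_{i+1} X_0 for every 1 ≤ i < ℓ, and φ(g_ℓ Y_0) = s'. (Equivalently: the graph with vertex set G/X_0 and edge set G, in which the edge g runs from the state g X_0 to the state φ(g Y_0), is ℓ-controllable — between any ordered pair of states there is a path consisting of exactly ℓ edges.) -/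
open scoped Pointwise


/-- A finite group `G` has a *shift structure* `({X_j}, Y₀, φ)` of depth `ℓ ≥ 1`:
a chain `1 = X_{-1} ≤ X_0 ≤ ⋯ ≤ X_ℓ = G` of normal subgroups (indices shifted by one,
so `X j` here is the paper's `X_{j-1}`), a normal subgroup `Y₀`, and an isomorphism
`φ : G/Y₀ ≃* G/X₀` with `φ((X_j Y₀)/Y₀) = X_{j+1}/X₀` for `-1 ≤ j < ℓ`. -/
structure IsShiftStructure {G : Type*} [Group G] [Finite G] (ℓ : ℕ)
    (X : ℕ → Subgroup G) (Y0 : Subgroup G) [Y0.Normal] [(X 1).Normal]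
    (φ : (G ⧸ Y0) ≃* (G ⧸ X 1)) : Prop where
  one_le : 1 ≤ ℓ
  bot_eq : X 0 = ⊥
  top_eq : X (ℓ + 1) = ⊤
  mono : ∀ j, X j ≤ X (j + 1)
  norm : ∀ j, (X j).Normal
  compat : ∀ j ≤ ℓ,
    Subgroup.map φ.toMonoidHom (Subgroup.map (QuotientGroup.mk' Y0) (X j ⊔ Y0)) =
      Subgroup.map (QuotientGroup.mk' (X 1)) (X (j + 1))

/-- if `G` has a shift structure of depth `ℓ`, then for any two states
`s, s' ∈ G/X₀` there are elements `g 0, …, g (ℓ-1)` of `G` forming a path of length `ℓ`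
from `s` to `s'` in the graph whose edge `g` runs from `g X₀` to `φ(g Y₀)`. -/
theorem shift_structure_controllable {G : Type*} [Group G] [Finite G] (ℓ : ℕ)
    (X : ℕ → Subgroup G) (Y0 : Subgroup G) [Y0.Normal] [(X 1).Normal]
    (φ : (G ⧸ Y0) ≃* (G ⧸ X 1)) (h : IsShiftStructure ℓ X Y0 φ)
    (s s' : G ⧸ X 1) :
    ∃ g : ℕ → G,
      (QuotientGroup.mk (g 0) : G ⧸ X 1) = s ∧
      (∀ i, i + 1 < ℓ →
        φ (QuotientGroup.mk (g i)) = (QuotientGroup.mk (g (i + 1)) : G ⧸ X 1)) ∧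
      φ (QuotientGroup.mk (g (ℓ - 1))) = s' := by
  classical
  -- main inductive claim
  have aux : ∀ k, 1 ≤ k → k ≤ ℓ → ∀ a : G, ∃ e : G ⧸ X 1,
      ∀ u : G ⧸ X 1, e⁻¹ * u ∈ Subgroup.map (QuotientGroup.mk' (X 1)) (X (k + 1)) →
        ∃ g : ℕ → G, (QuotientGroup.mk (g 0) : G ⧸ X 1) = QuotientGroup.mk a ∧
          (∀ i, i + 1 < k →
            φ (QuotientGroup.mk (g i)) = (QuotientGroup.mk (g (i + 1)) : G ⧸ X 1)) ∧
          φ (QuotientGroup.mk (g (k - 1))) = u := by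
    intro k hk
    induction k, hk using Nat.le_induction with
    | base =>
      intro hle a
      refine ⟨φ (QuotientGroup.mk a : G ⧸ Y0), ?_⟩
      intro u hu
      rw [← h.compat 1 hle] at hu
      obtain ⟨v, hv, hφv⟩ := hu
      obtain ⟨w, hw, rfl⟩ := hv
      haveI := h.norm 1
      have hw' : w ∈ ((X 1 : Subgroup G) : Set G) * (Y0 : Set G) := by
        rw [← Subgroup.mul_normal]; exact hw
      obtain ⟨x, hx, y, hy, rfl⟩ := hw'
      refine ⟨fun _ => a * x, ?_, ?_, ?_⟩
      · exact QuotientGroup.mk_mul_of_mem a hx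
      · intro i hi; omega
      · have hxy : (QuotientGroup.mk (a * x) : G ⧸ Y0)
            = QuotientGroup.mk a * QuotientGroup.mk (x * y) := by
          rw [← QuotientGroup.mk_mul]
          exact (QuotientGroup.mk_mul_of_mem (a * x) hy).symm.trans
            (by rw [mul_assoc])
        rw [hxy, map_mul]
        rw [QuotientGroup.mk'_apply] at hφv
        rw [show φ (QuotientGroup.mk (x * y)) = φ.toMonoidHom (QuotientGroup.mk (x * y))
          from rfl, hφv]
        group
    | succ k hk1 IH =>
      intro hle a
      obtain ⟨e, he⟩ := IH (le_trans (Nat.le_succ k) hle) a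
      obtain ⟨b, hb⟩ := QuotientGroup.mk'_surjective (X 1) e
      refine ⟨φ (QuotientGroup.mk b : G ⧸ Y0), ?_⟩
      intro u hu
      rw [← h.compat (k + 1) hle] at hu
      obtain ⟨v, hv, hφv⟩ := hu
      obtain ⟨w, hw, rfl⟩ := hv
      haveI := h.norm (k + 1)
      have hw' : w ∈ ((X (k + 1) : Subgroup G) : Set G) * (Y0 : Set G) := by
        rw [← Subgroup.mul_normal]; exact hw
      obtain ⟨x, hx, y, hy, rfl⟩ := hw'
      have hu' : e⁻¹ * (QuotientGroup.mk (b * x) : G ⧸ X 1)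
          ∈ Subgroup.map (QuotientGroup.mk' (X 1)) (X (k + 1)) := by
        refine ⟨x, hx, ?_⟩
        rw [QuotientGroup.mk'_apply, ← hb, QuotientGroup.mk'_apply,
          QuotientGroup.mk_mul]
        group
      obtain ⟨g, hg0, hgpath, hglast⟩ := he _ hu'
      refine ⟨fun i => if i = k then b * x else g i, ?_, ?_, ?_⟩
      · simp only [if_neg (show ¬ (0 = k) by omega)]; exact hg0
      · intro i hi
        rcases Nat.lt_or_ge (i + 1) k with hik | hik
        · have hi1 : i ≠ k := by omega
          have hi2 : i + 1 ≠ k := by omega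
          simpa [hi1, hi2] using hgpath i hik
        · have hik' : i + 1 = k := by omega
          have hi1 : i ≠ k := by omega
          have : i = k - 1 := by omega
          subst this
          simp only [hi1, if_false, hik', if_pos rfl]
          exact hglast
      · simp only [Nat.add_sub_cancel, eq_self_iff_true, if_true]
        have hxy : (QuotientGroup.mk (b * x) : G ⧸ Y0)
            = QuotientGroup.mk b * QuotientGroup.mk (x * y) := by
          rw [← QuotientGroup.mk_mul]
          exact (QuotientGroup.mk_mul_of_mem (b * x) hy).symm.trans
            (by rw [mul_assoc])
        rw [hxy, map_mul]
        rw [QuotientGroup.mk'_apply] at hφv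
        rw [show φ (QuotientGroup.mk (x * y)) = φ.toMonoidHom (QuotientGroup.mk (x * y))
          from rfl, hφv]
        group
  obtain ⟨a, rfl⟩ := QuotientGroup.mk'_surjective (X 1) s
  obtain ⟨e, he⟩ := aux ℓ h.one_le le_rfl a
  have htop : e⁻¹ * s' ∈ Subgroup.map (QuotientGroup.mk' (X 1)) (X (ℓ + 1)) := by
    rw [h.top_eq]
    obtain ⟨c, hc⟩ := QuotientGroup.mk'_surjective (X 1) (e⁻¹ * s')
    exact ⟨c, trivial, hc⟩
  obtain ⟨g, hg0, hgpath, hglast⟩ := he s' htop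
  exact ⟨g, hg0, hgpath, hglast⟩
end

section
/- Let G be a finite group, let X_0 and Y_0 be normal subgroups of G, and let φ : G/Y_0 → G/X_0 be a group isomorphism. Define subgroups of G recursively by X_{-1} := 1 and, for j ≥ -1, X_{j+1} := the preimage under the natural projection π_X : G → G/X_0 of the image under φ of the subgroup (X_j Y_0)/Y_0 of G/Y_0 (this recursion returns the given X_0 at step j = -1). Then: (i) every X_j is a normal subgroup of G; (ii) X_j ≤ X_{j+1} for all j ≥ -1; and (iii) if X_ℓ = G for some ℓ ≥ 1, then ({X_j}_{j=-1}^{ℓ}, Y_0, φ) is a shift structure of depth ℓ for G, i.e., φ maps (X_j Y_0)/Y_0 onto X_{j+1}/X_0 for every -1 ≤ j < ℓ. -/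
/-- Let `X0, Y0` be normal subgroups of a finite group `G` and
`φ : G/Y0 ≃* G/X0` an isomorphism.  Define (with indices shifted by one, so `X 0` is the
paper's `X_{-1} = 1`) `X 0 = ⊥` and
`X (n+1) = π_X⁻¹ (φ ((X n ⊔ Y0) / Y0))`.  Then the recursion returns the given `X0` at the
first step (`X 1 = X0`), every `X n` is normal in `G`, the chain is increasing, and whenever
`X (ℓ+1) = ⊤` for some `ℓ ≥ 1`, the family `({X_j}, Y0, φ)` is a shift structure of depth
`ℓ`, i.e. `φ ((X j ⊔ Y0)/Y0) = X (j+1) / X0` for all `0 ≤ j ≤ ℓ`. -/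
theorem shift_structure_of_recursion {G : Type*} [Group G] [Finite G]
    (X0 Y0 : Subgroup G) [X0.Normal] [Y0.Normal]
    (φ : (G ⧸ Y0) ≃* (G ⧸ X0)) (X : ℕ → Subgroup G)
    (hbot : X 0 = ⊥)
    (hrec : ∀ n, X (n + 1) =
      Subgroup.comap (QuotientGroup.mk' X0)
        (Subgroup.map φ.toMonoidHom (Subgroup.map (QuotientGroup.mk' Y0) (X n ⊔ Y0)))) :
    X 1 = X0 ∧
    (∀ n, (X n).Normal) ∧
    (∀ n, X n ≤ X (n + 1)) ∧
    (∀ ℓ : ℕ, 1 ≤ ℓ → X (ℓ + 1) = ⊤ → ∀ j ≤ ℓ,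
      Subgroup.map φ.toMonoidHom (Subgroup.map (QuotientGroup.mk' Y0) (X j ⊔ Y0)) =
        Subgroup.map (QuotientGroup.mk' X0) (X (j + 1))) := by
  have h1 : X 1 = X0 := by
    rw [hrec, hbot, bot_sup_eq]
    have hY : Subgroup.map (QuotientGroup.mk' Y0) Y0 = ⊥ := by
      rw [Subgroup.map_eq_bot_iff, QuotientGroup.ker_mk']
    rw [hY, Subgroup.map_bot, MonoidHom.comap_bot, QuotientGroup.ker_mk']
  have hnorm : ∀ n, (X n).Normal := by
    intro n
    induction n with
    | zero => rw [hbot]; infer_instance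
    | succ n ih =>
      rw [hrec]
      haveI := ih
      have h2 : (Subgroup.map (QuotientGroup.mk' Y0) (X n ⊔ Y0)).Normal :=
        Subgroup.Normal.map (Subgroup.sup_normal _ _) _ (QuotientGroup.mk'_surjective Y0)
      have h3 : (Subgroup.map φ.toMonoidHom
          (Subgroup.map (QuotientGroup.mk' Y0) (X n ⊔ Y0))).Normal :=
        Subgroup.Normal.map h2 _ φ.surjective
      exact Subgroup.Normal.comap h3 _
  refine ⟨h1, hnorm, ?_, ?_⟩
  · intro n
    induction n with
    | zero => rw [hbot]; exact bot_le
    | succ n ih =>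
      rw [hrec n, hrec (n + 1)]
      exact Subgroup.comap_mono (Subgroup.map_mono (Subgroup.map_mono (sup_le_sup_right ih _)))
  · intro ℓ _ _ j _
    rw [hrec j, Subgroup.map_comap_eq_self_of_surjective (QuotientGroup.mk'_surjective X0)]
end

section
/- Let G be a finite group with a shift structure ({X_j}, Y_0, φ) of depth ℓ. Then for every j with -1 ≤ j < ℓ - 1 there is a group isomorphism X_{j+1}/X_j* ≅ X_{j+2}/X_{j+1}, where X_j* = X_j (X_{j+1} ∩ Y_0) is a normal subgroup of G contained in X_{j+1}. -/
/-- `QuotIso A N B M hN hM` says the quotient `A N / N` (the image of `A` in the ambient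
quotient by the normal subgroup `N`) is isomorphic as a group to `B M / M`.
When `N ≤ A` and `M ≤ B` this is exactly `A/N ≅ B/M`. -/
def QuotIso {G : Type*} [Group G] {H : Type*} [Group H]
    (A N : Subgroup G) (B M : Subgroup H) (hN : N.Normal) (hM : M.Normal) : Prop :=
  letI := hN
  letI := hM
  Nonempty (↥(Subgroup.map (QuotientGroup.mk' N) A) ≃* ↥(Subgroup.map (QuotientGroup.mk' M) B))

section Aux

variable {G : Type*} [Group G]

/-- The image of `A` in `G ⧸ N` is isomorphic to the quotient of `A` by the kernel of the
restriction of the projection. -/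
noncomputable def mapMkEquiv (N A : Subgroup G) [N.Normal] :
    A ⧸ ((QuotientGroup.mk' N).comp A.subtype).ker ≃* ↥(A.map (QuotientGroup.mk' N)) :=
  (QuotientGroup.quotientKerEquivRange _).trans
    (MulEquiv.subgroupCongr (by rw [MonoidHom.range_comp, Subgroup.range_subtype]))

lemma ker_mk'_comp_subtype (N A : Subgroup G) [N.Normal] :
    ((QuotientGroup.mk' N).comp A.subtype).ker = N.subgroupOf A := by
  rw [← MonoidHom.comap_ker, QuotientGroup.ker_mk']
  rfl

/-- Dedekind modular law for normal subgroups. -/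
lemma modular_normal (Xi Y A : Subgroup G) [Xi.Normal] [Y.Normal] (hXA : Xi ≤ A) :
    Xi ⊔ (A ⊓ Y) = (Xi ⊔ Y) ⊓ A := by
  apply le_antisymm
  · exact sup_le (le_inf le_sup_left hXA)
      (le_inf (inf_le_right.trans le_sup_right) inf_le_left)
  · rintro a ha
    rw [Subgroup.mem_inf] at ha
    obtain ⟨hS, hA⟩ := ha
    have : a ∈ (↑(Xi ⊔ Y) : Set G) := hS
    rw [Subgroup.mul_normal] at this
    obtain ⟨x, hx, y, hy, rfl⟩ := this
    have hyA : y ∈ A := by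
      have := mul_mem (inv_mem (hXA hx)) hA
      rwa [inv_mul_cancel_left] at this
    exact mul_mem (Subgroup.mem_sup_left hx)
      (Subgroup.mem_sup_right (Subgroup.mem_inf.2 ⟨hyA, hy⟩))

end Aux

/-- for `-1 ≤ j < ℓ - 1` (here the index `i = j + 1` satisfies `i < ℓ`),
`X_j* = X_j (X_{j+1} ∩ Y₀)` is a normal subgroup of `G` contained in `X_{j+1}` and
`X_{j+1} / X_j* ≅ X_{j+2} / X_{j+1}`. -/
theorem shift_structure_quot_iso_succ {G : Type*} [Group G] [Finite G] (ℓ : ℕ)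
    (X : ℕ → Subgroup G) (Y0 : Subgroup G) [Y0.Normal] [(X 1).Normal]
    (φ : (G ⧸ Y0) ≃* (G ⧸ X 1)) (h : IsShiftStructure ℓ X Y0 φ) :
    ∀ i < ℓ, ∃ hstar : (X i ⊔ (X (i + 1) ⊓ Y0)).Normal,
      X i ⊔ (X (i + 1) ⊓ Y0) ≤ X (i + 1) ∧
      QuotIso (X (i + 1)) (X i ⊔ (X (i + 1) ⊓ Y0)) (X (i + 2)) (X (i + 1))
        hstar (h.norm (i + 1)) := by
  intro i hi
  haveI hA : (X (i+1)).Normal := h.norm (i+1)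
  haveI : (X i).Normal := h.norm i
  haveI : (X (i+1) ⊓ Y0).Normal := Subgroup.normal_inf_normal _ _
  haveI hstar : (X i ⊔ (X (i+1) ⊓ Y0)).Normal := Subgroup.sup_normal _ _
  have hXA : X i ≤ X (i+1) := h.mono i
  refine ⟨hstar, sup_le hXA inf_le_left, ?_⟩
  have hmono : Monotone X := monotone_nat_of_le_succ h.mono
  have h1A : X 1 ≤ X (i+1) := hmono (by omega)
  haveI hS : (X i ⊔ Y0).Normal := Subgroup.sup_normal _ _
  -- the isomorphism Ψ : G/(X i ⊔ Y₀) ≃ G/X (i+1), from the third isomorphism theorem and φ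
  let e1 : (G ⧸ Y0) ⧸ ((X i ⊔ Y0).map (QuotientGroup.mk' Y0)) ≃* G ⧸ (X i ⊔ Y0) :=
    QuotientGroup.quotientQuotientEquivQuotient Y0 (X i ⊔ Y0) le_sup_right
  let e2 : (G ⧸ X 1) ⧸ ((X (i+1)).map (QuotientGroup.mk' (X 1))) ≃* G ⧸ X (i+1) :=
    QuotientGroup.quotientQuotientEquivQuotient (X 1) (X (i+1)) h1A
  have hcongr : Subgroup.map (φ : G ⧸ Y0 →* G ⧸ X 1) ((X i ⊔ Y0).map (QuotientGroup.mk' Y0)) =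
      (X (i+1)).map (QuotientGroup.mk' (X 1)) := h.compat i (le_of_lt hi)
  let e3 := QuotientGroup.congr _ _ φ hcongr
  let Ψ : G ⧸ (X i ⊔ Y0) ≃* G ⧸ X (i+1) := e1.symm.trans (e3.trans e2)
  have psi_mk : ∀ x : G, Ψ ((x : G ⧸ (X i ⊔ Y0))) = e2 ((φ ((x : G ⧸ Y0)) : G ⧸ X 1)) :=
    fun x => rfl
  -- Ψ maps the image of X (i+1) onto the image of X (i+2)
  have hc2 := h.compat (i+1) hi
  have key : ((X (i+1)).map (QuotientGroup.mk' (X i ⊔ Y0))).map (Ψ : _ →* _) =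
      (X (i+2)).map (QuotientGroup.mk' (X (i+1))) := by
    apply le_antisymm
    · rintro _ ⟨_, ⟨a, ha, rfl⟩, rfl⟩
      have hmem : φ ((a : G ⧸ Y0)) ∈ Subgroup.map (QuotientGroup.mk' (X 1)) (X (i+2)) := by
        rw [← hc2]
        exact ⟨_, ⟨a, Subgroup.mem_sup_left ha, rfl⟩, rfl⟩
      obtain ⟨b, hb, hb'⟩ := hmem
      refine ⟨b, hb, ?_⟩
      show QuotientGroup.mk b = Ψ ((a : G ⧸ (X i ⊔ Y0)))
      rw [psi_mk a, ← hb']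
      rfl
    · rintro _ ⟨b, hb, rfl⟩
      have hmem : (QuotientGroup.mk' (X 1)) b ∈
          Subgroup.map φ.toMonoidHom
            (Subgroup.map (QuotientGroup.mk' Y0) (X (i+1) ⊔ Y0)) := by
        rw [hc2]
        exact ⟨b, hb, rfl⟩
      obtain ⟨_, ⟨c, hc, rfl⟩, hq'⟩ := hmem
      have hcmem : c ∈ (↑(X (i+1) ⊔ Y0) : Set G) := hc
      rw [Subgroup.mul_normal] at hcmem
      obtain ⟨a, ha, y, hy, rfl⟩ := hcmem
      refine ⟨((a*y : G) : G ⧸ (X i ⊔ Y0)), ⟨a, ha, ?_⟩, ?_⟩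
      · show QuotientGroup.mk a = QuotientGroup.mk (a*y)
        apply (QuotientGroup.mk'_eq_mk' _).2
        exact ⟨y, Subgroup.mem_sup_right hy, rfl⟩
      · show Ψ (((a*y : G) : G ⧸ (X i ⊔ Y0))) = QuotientGroup.mk b
        rw [psi_mk (a*y)]
        have : φ (((a*y : G) : G ⧸ Y0)) = QuotientGroup.mk b := hq'
        rw [this]
        rfl
  -- kernels of the two restrictions to X (i+1) coincide, by the modular law
  have kereq : ((QuotientGroup.mk' (X i ⊔ (X (i+1) ⊓ Y0))).comp (X (i+1)).subtype).ker =
      ((QuotientGroup.mk' (X i ⊔ Y0)).comp (X (i+1)).subtype).ker := by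
    rw [ker_mk'_comp_subtype, ker_mk'_comp_subtype, modular_normal (X i) Y0 (X (i+1)) hXA,
      Subgroup.inf_subgroupOf_right]
  exact ⟨((mapMkEquiv _ (X (i+1))).symm.trans
    ((QuotientGroup.quotientMulEquivOfEq kereq).trans (mapMkEquiv _ (X (i+1))))).trans
    ((Ψ.subgroupMap _).trans (MulEquiv.subgroupCongr key))⟩
end

section
/- Let G be a finite group with a shift structure ({X_j}, Y_0, φ) of depth ℓ. Then there exists a chain of subgroups 1 = Δ_{-1} ≤ Δ_0 ≤ Δ_1 ≤ ⋯ ≤ Δ_ℓ = X_0, each Δ_j normal in G and contained in X_0 (the signature chain), such that for every j with -1 ≤ j < ℓ: (i) X_{j+1}/X_j ≅ X_0/Δ_j; (ii) X_{j+1}/X_j* ≅ X_0/Δ_{j+1}; (iii) X_j*/X_j ≅ Δ_{j+1}/Δ_j; (iv) Δ_0 = X_0 ∩ Y_0; (v) Δ_{j+1}/Δ_j ≅ (X_{j+1} ∩ Y_0)/(X_j ∩ Y_0); and (vi) |Δ_{j+1}| = |X_{j+1} ∩ Y_0|. -/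
section AuxLemmas
open Pointwise

variable {G : Type*} [Group G] {H : Type*} [Group H]

private lemma aux_map_inf_of_ker_le (f : G →* H) {A B : Subgroup G} (hA : f.ker ≤ A) :
    (A ⊓ B).map f = A.map f ⊓ B.map f := by
  refine le_antisymm (le_inf (Subgroup.map_mono inf_le_left) (Subgroup.map_mono inf_le_right)) ?_
  rintro x ⟨ha, hb⟩
  obtain ⟨a, haA, rfl⟩ := ha
  obtain ⟨b, hbB, hba⟩ := hb
  have hk : a * b⁻¹ ∈ f.ker := by
    rw [MonoidHom.mem_ker, map_mul, map_inv, hba, mul_inv_cancel]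
  have hbA : b ∈ A := by
    have := A.mul_mem (A.inv_mem (hA hk)) haA
    simpa using this
  exact ⟨b, ⟨hbA, hbB⟩, hba⟩

private lemma aux_map_inf_comap (f : G →* H) (A : Subgroup G) (T : Subgroup H) :
    (A ⊓ T.comap f).map f = A.map f ⊓ T := by
  refine le_antisymm (le_inf (Subgroup.map_mono inf_le_left) ?_) ?_
  · rintro x ⟨a, ⟨_, haT⟩, rfl⟩; exact haT
  · rintro x ⟨⟨a, haA, rfl⟩, hT⟩
    exact ⟨a, ⟨haA, hT⟩, rfl⟩

private lemma aux_modular {p q r : Subgroup G} [hr : r.Normal] (h : p ≤ q) :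
    p ⊔ (r ⊓ q) = (p ⊔ r) ⊓ q := by
  refine le_antisymm (sup_le (le_inf le_sup_left h)
    (le_inf (le_trans inf_le_left le_sup_right) inf_le_right)) ?_
  rintro x ⟨hpr, hq⟩
  have hx : x ∈ ((p : Set G) * (r : Set G)) := by
    rw [← Subgroup.mul_normal p r]; exact hpr
  obtain ⟨a, ha, b, hb, rfl⟩ := Set.mem_mul.1 hx
  have hbq : b ∈ q := by
    have := q.mul_mem (q.inv_mem (h ha)) hq
    simpa using this
  exact Subgroup.mul_mem _ ((le_sup_left : p ≤ p ⊔ (r ⊓ q)) ha)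
    ((le_sup_right : r ⊓ q ≤ p ⊔ (r ⊓ q)) ⟨hb, hbq⟩)

end AuxLemmas

section QuotIsoLemmas

variable {G : Type*} [Group G] {H : Type*} [Group H] {K : Type*} [Group K]

private lemma quotIso_refl (A N : Subgroup G) (hN : N.Normal) : QuotIso A N A N hN hN := by
  letI := hN
  exact ⟨MulEquiv.refl _⟩

private lemma quotIso_symm {A N : Subgroup G} {B M : Subgroup H} {hN : N.Normal} {hM : M.Normal}
    (h : QuotIso A N B M hN hM) : QuotIso B M A N hM hN := by
  letI := hN; letI := hM
  exact h.elim fun e => ⟨e.symm⟩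

private lemma quotIso_trans {A N : Subgroup G} {B M : Subgroup H} {C O : Subgroup K}
    {hN : N.Normal} {hM : M.Normal} {hM' : M.Normal} {hO : O.Normal}
    (h1 : QuotIso A N B M hN hM) (h2 : QuotIso B M C O hM' hO) : QuotIso A N C O hN hO := by
  letI := hN; letI := hM; letI := hO
  exact h1.elim fun e1 => h2.elim fun e2 => ⟨e1.trans e2⟩

private lemma quotIso_congr {A A' N N' : Subgroup G} {B B' M M' : Subgroup H}
    {h1 : N.Normal} {h2 : M.Normal} {h1' : N'.Normal} {h2' : M'.Normal}
    (hA : A = A') (hN : N = N') (hB : B = B') (hM : M = M')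
    (h : QuotIso A N B M h1 h2) : QuotIso A' N' B' M' h1' h2' := by
  subst hA; subst hN; subst hB; subst hM; exact h

/-- Key transfer lemma: a homomorphism whose kernel meets `A` inside `N` induces an
isomorphism between `A/N` and its image pair. -/
private lemma quotIso_of_map (f : G →* H) (A N : Subgroup G)
    (hN : N.Normal) (hM : (N.map f).Normal) (hNA : N ≤ A) (hker : f.ker ⊓ A ≤ N) :
    QuotIso A N (A.map f) (N.map f) hN hM := by
  letI := hN; letI := hM
  set u : ↥A →* H ⧸ N.map f := (QuotientGroup.mk' (N.map f)).comp (f.comp A.subtype) with hu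
  set v : ↥A →* G ⧸ N := (QuotientGroup.mk' N).comp A.subtype with hv
  have hArange : (⊤ : Subgroup ↥A).map A.subtype = A := by
    rw [← MonoidHom.range_eq_map, Subgroup.range_subtype]
  have hurange : u.range = (A.map f).map (QuotientGroup.mk' (N.map f)) := by
    rw [hu, MonoidHom.range_eq_map, ← Subgroup.map_map, ← Subgroup.map_map, hArange]
  have hvrange : v.range = A.map (QuotientGroup.mk' N) := by
    rw [hv, MonoidHom.range_eq_map, ← Subgroup.map_map, hArange]
  have hmod : (N ⊔ f.ker) ⊓ A = N := by
    rw [← aux_modular hNA, sup_eq_left.2 hker]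
  have hkeruv : u.ker = v.ker := by
    rw [hu, hv, ← MonoidHom.comap_ker, ← MonoidHom.comap_ker, QuotientGroup.ker_mk',
      QuotientGroup.ker_mk', ← Subgroup.comap_comap, Subgroup.comap_map_eq]
    ext a
    simp only [Subgroup.mem_comap]
    constructor
    · intro ha
      have h2 : (a : G) ∈ (N ⊔ f.ker) ⊓ A := ⟨ha, a.2⟩
      rw [hmod] at h2
      exact h2
    · intro ha
      exact (le_sup_left : N ≤ N ⊔ f.ker) ha
  exact ⟨(MulEquiv.subgroupCongr hvrange).symm.trans
    ((QuotientGroup.quotientKerEquivRange v).symm.trans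
      ((QuotientGroup.quotientMulEquivOfEq hkeruv.symm).trans
        ((QuotientGroup.quotientKerEquivRange u).trans (MulEquiv.subgroupCongr hurange))))⟩

private lemma card_map_mk' [Finite G] (A N : Subgroup G) (hN : N.Normal) (hNA : N ≤ A) :
    Nat.card A = Nat.card ↥(A.map (QuotientGroup.mk' (N := N) (nN := hN))) * Nat.card N := by
  letI := hN
  set v : ↥A →* G ⧸ N := (QuotientGroup.mk' N).comp A.subtype with hv
  have hArange : (⊤ : Subgroup ↥A).map A.subtype = A := by
    rw [← MonoidHom.range_eq_map, Subgroup.range_subtype]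
  have hvrange : v.range = A.map (QuotientGroup.mk' N) := by
    rw [hv, MonoidHom.range_eq_map, ← Subgroup.map_map, hArange]
  have hvker : v.ker = N.subgroupOf A := by
    rw [hv, ← MonoidHom.comap_ker, QuotientGroup.ker_mk']; rfl
  have h1 : Nat.card ↥A = Nat.card (↥A ⧸ v.ker) * Nat.card v.ker :=
    Subgroup.card_eq_card_quotient_mul_card_subgroup v.ker
  have h2 : Nat.card (↥A ⧸ v.ker) = Nat.card ↥(A.map (QuotientGroup.mk' N)) := by
    rw [← hvrange]
    exact Nat.card_congr (QuotientGroup.quotientKerEquivRange v).toEquiv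
  have h3 : Nat.card v.ker = Nat.card N := by
    rw [hvker]
    exact Nat.card_congr (Subgroup.subgroupOfEquivOfLe hNA).toEquiv
  rw [h1, h2, h3]

private lemma card_eq_of_quotIso [Finite G] [Finite H] {A N : Subgroup G} {B M : Subgroup H}
    {hN : N.Normal} {hM : M.Normal} (h : QuotIso A N B M hN hM) (hNA : N ≤ A) (hMB : M ≤ B) :
    Nat.card A * Nat.card M = Nat.card B * Nat.card N := by
  letI := hN; letI := hM
  have hQ : Nat.card ↥(A.map (QuotientGroup.mk' N)) = Nat.card ↥(B.map (QuotientGroup.mk' M)) :=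
    h.elim fun e => Nat.card_congr e.toEquiv
  rw [card_map_mk' A N hN hNA, card_map_mk' B M hM hMB, hQ]
  ring

end QuotIsoLemmas

private def chainC {G : Type*} [Group G] {Q : Type*} [Group Q]
    (f π : G →* Q) (n : ℕ) : Subgroup G :=
  Nat.rec ⊥ (fun _ S => (S.map π).comap f) n

/-- existence of the signature chain `1 = Δ_{-1} ≤ Δ_0 ≤ ⋯ ≤ Δ_ℓ = X_0`
(indices shifted by one, `Δ k` here is the paper's `Δ_{k-1}`) of normal subgroups of `G`
contained in `X_0`, satisfying, for every `-1 ≤ j < ℓ` (i.e. `k = j+1 ≤ ℓ`):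
(i) `X_{j+1}/X_j ≅ X_0/Δ_j`; (ii) `X_{j+1}/X_j* ≅ X_0/Δ_{j+1}`;
(iii) `X_j*/X_j ≅ Δ_{j+1}/Δ_j`; (iv) `Δ_0 = X_0 ∩ Y_0`;
(v) `Δ_{j+1}/Δ_j ≅ (X_{j+1} ∩ Y_0)/(X_j ∩ Y_0)`; (vi) `|Δ_{j+1}| = |X_{j+1} ∩ Y_0|`. -/
theorem shift_structure_signature_chain {G : Type*} [Group G] [Finite G] (ℓ : ℕ)
    (X : ℕ → Subgroup G) (Y0 : Subgroup G) [Y0.Normal] [(X 1).Normal]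
    (φ : (G ⧸ Y0) ≃* (G ⧸ X 1)) (h : IsShiftStructure ℓ X Y0 φ) :
    ∃ Δ : ℕ → Subgroup G,
      ∃ hΔ : ∀ k, (Δ k).Normal,
      ∃ hstar : ∀ k, (X k ⊔ (X (k + 1) ⊓ Y0)).Normal,
      ∃ hinf : ∀ k, (X k ⊓ Y0).Normal,
      Δ 0 = ⊥ ∧ Δ (ℓ + 1) = X 1 ∧
      (∀ k, Δ k ≤ Δ (k + 1)) ∧ (∀ k, Δ k ≤ X 1) ∧
      Δ 1 = X 1 ⊓ Y0 ∧
      ∀ k ≤ ℓ,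
        QuotIso (X (k + 1)) (X k) (X 1) (Δ k) (h.norm k) (hΔ k) ∧
        QuotIso (X (k + 1)) (X k ⊔ (X (k + 1) ⊓ Y0)) (X 1) (Δ (k + 1))
          (hstar k) (hΔ (k + 1)) ∧
        QuotIso (X k ⊔ (X (k + 1) ⊓ Y0)) (X k) (Δ (k + 1)) (Δ k)
          (h.norm k) (hΔ k) ∧
        QuotIso (Δ (k + 1)) (Δ k) (X (k + 1) ⊓ Y0) (X k ⊓ Y0)
          (hΔ k) (hinf k) ∧
        Nat.card ↥(Δ (k + 1)) = Nat.card ↥(X (k + 1) ⊓ Y0) := by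
  classical
  set f : G →* G ⧸ X 1 := φ.toMonoidHom.comp (QuotientGroup.mk' Y0) with hf
  set π : G →* G ⧸ X 1 := QuotientGroup.mk' (X 1) with hπ
  have hπsurj : Function.Surjective π := QuotientGroup.mk'_surjective _
  have hfsurj : Function.Surjective f := φ.surjective.comp (QuotientGroup.mk'_surjective _)
  have hπker : π.ker = X 1 := QuotientGroup.ker_mk' _
  have hfker : f.ker = Y0 := by
    rw [hf, ← MonoidHom.comap_ker]
    have hφ : (φ.toMonoidHom : (G ⧸ Y0) →* (G ⧸ X 1)).ker = ⊥ := by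
      rw [MonoidHom.ker_eq_bot_iff]; exact φ.injective
    rw [hφ, MonoidHom.comap_bot, QuotientGroup.ker_mk']
  have hXle : Monotone X := monotone_nat_of_le_succ h.mono
  have hXtop : ∀ j, ℓ + 1 ≤ j → X j = ⊤ := fun j hj => top_le_iff.1 (h.top_eq ▸ hXle hj)
  -- the shifted compatibility, valid for all indices
  have hcompat' : ∀ j, (X j).map f = (X (j + 1)).map π := by
    intro j
    rcases le_or_gt j ℓ with hj | hj
    · have hYmap : Y0.map (QuotientGroup.mk' Y0) = ⊥ := by
        rw [Subgroup.map_eq_bot_iff, QuotientGroup.ker_mk']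
      have h2 : (X j ⊔ Y0).map (QuotientGroup.mk' Y0) = (X j).map (QuotientGroup.mk' Y0) := by
        rw [Subgroup.map_sup, hYmap, sup_bot_eq]
      rw [hf, ← Subgroup.map_map, ← h2, h.compat j hj, hπ]
    · have h1 : X j = ⊤ := hXtop j hj
      have h2 : X (j + 1) = ⊤ := hXtop _ (le_trans hj (Nat.le_succ j))
      have hm : ∀ (g : G →* G ⧸ X 1), Function.Surjective g → (⊤ : Subgroup G).map g = ⊤ :=
        fun g hg => (MonoidHom.range_eq_map g).symm.trans (MonoidHom.range_eq_top.2 hg)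
      rw [h1, h2, hm f hfsurj, hm π hπsurj]
  have hEX : ∀ j, ((X (j + 1)).map π).comap f = X j ⊔ Y0 := by
    intro j; rw [← hcompat' j, Subgroup.comap_map_eq, hfker]
  set c : ℕ → Subgroup G := chainC f π with hc
  have hc0 : c 0 = ⊥ := rfl
  have hcs : ∀ k, c (k + 1) = ((c k).map π).comap f := fun k => rfl
  have hCnorm : ∀ k, (c k).Normal := by
    intro k; induction k with
    | zero =>
      exact ⟨fun n hn g => by
        have h1 : n = 1 := hn
        show g * n * g⁻¹ ∈ (⊥ : Subgroup G)
        simp [h1]⟩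
    | succ k ih => exact Subgroup.Normal.comap (Subgroup.Normal.map ih π hπsurj) f
  have hY0C : ∀ k, Y0 ≤ c (k + 1) := by
    intro k x hx
    show f x ∈ (c k).map π
    have hx1 : f x = 1 := by
      have : x ∈ f.ker := by rw [hfker]; exact hx
      exact this
    rw [hx1]; exact one_mem _
  have hCmono : ∀ k, c k ≤ c (k + 1) := by
    intro k; induction k with
    | zero => exact bot_le
    | succ k ih =>
      rw [hcs, hcs]
      exact Subgroup.comap_mono (Subgroup.map_mono ih)
  set P : ℕ → ℕ → Subgroup G := fun j k => X (j + 1) ⊓ (c k ⊔ X j) with hP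
  have hsupnorm : ∀ (A B : Subgroup G), A.Normal → B.Normal → (A ⊔ B).Normal := by
    intro A B hA hB; haveI := hA; haveI := hB; exact Subgroup.sup_normal A B
  have hinfnorm : ∀ (A B : Subgroup G), A.Normal → B.Normal → (A ⊓ B).Normal := by
    intro A B hA hB
    exact ⟨fun n hn g => ⟨hA.conj_mem n hn.1 g, hB.conj_mem n hn.2 g⟩⟩
  have hPnorm : ∀ j k, (P j k).Normal := fun j k =>
    hinfnorm _ _ (h.norm (j + 1)) (hsupnorm _ _ (hCnorm k) (h.norm j))
  have hPleX : ∀ j k, P j k ≤ X (j + 1) := fun j k => inf_le_left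
  have hXleP : ∀ j k, X j ≤ P j k := fun j k => le_inf (h.mono j) le_sup_right
  have hPmono : ∀ j k, P j k ≤ P j (k + 1) := fun j k =>
    inf_le_inf_left _ (sup_le_sup_right (hCmono k) _)
  have hPj0 : ∀ j, P j 0 = X j := by
    intro j
    simp only [hP]
    rw [hc0, bot_sup_eq, inf_eq_right.2 (h.mono j)]
  have hPL : ∀ j k, P j (k + 1) = X (j + 1) ⊓ (((P (j + 1) k).map π).comap f) := by
    intro j k
    simp only [hP]
    rw [aux_map_inf_of_ker_le π (by rw [hπker]; exact hXle (by omega : 1 ≤ j + 1 + 1)),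
      Subgroup.comap_inf, hEX (j + 1), Subgroup.map_sup,
      ← Subgroup.comap_sup_eq f (Subgroup.map π (c k)) (Subgroup.map π (X (j + 1))) hfsurj,
      ← hcs k, hEX j,
      sup_comm (X j) Y0, ← sup_assoc, sup_eq_left.2 (hY0C k),
      ← inf_assoc, inf_eq_left.2 (le_sup_left : X (j + 1) ≤ X (j + 1) ⊔ Y0)]
  have hmapP : ∀ j k, (P j (k + 1)).map f = (P (j + 1) k).map π := by
    intro j k
    rw [hPL j k, aux_map_inf_comap f _ _, hcompat' (j + 1),
      inf_eq_right.2 (Subgroup.map_mono (hPleX (j + 1) k))]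
  -- the two shift claims
  have claim1 : ∀ j k, QuotIso (X (j + 1 + 1)) (P (j + 1) k) (X (j + 1)) (P j (k + 1))
      (hPnorm (j + 1) k) (hPnorm j (k + 1)) := by
    intro j k
    have hker1 : f.ker ⊓ X (j + 1) ≤ P j (k + 1) := by
      rw [hfker]
      simp only [hP]
      exact le_inf inf_le_right
        (le_trans inf_le_left (le_trans (hY0C k) le_sup_left))
    have hker2 : π.ker ⊓ X (j + 1 + 1) ≤ P (j + 1) k := by
      rw [hπker]
      exact le_trans inf_le_left (le_trans (hXle (by omega : 1 ≤ j + 1)) (hXleP (j + 1) k))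
    have k1 := quotIso_of_map f (X (j + 1)) (P j (k + 1)) (hPnorm j (k + 1))
      (Subgroup.Normal.map (hPnorm j (k + 1)) f hfsurj) (hPleX j (k + 1)) hker1
    have k2 := quotIso_of_map π (X (j + 1 + 1)) (P (j + 1) k) (hPnorm (j + 1) k)
      (Subgroup.Normal.map (hPnorm (j + 1) k) π hπsurj) (hPleX (j + 1) k) hker2
    have k1' := quotIso_congr (h1' := hPnorm j (k + 1))
      (h2' := Subgroup.Normal.map (hPnorm (j + 1) k) π hπsurj)
      rfl rfl (hcompat' (j + 1)) (hmapP j k) k1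
    exact quotIso_trans k2 (quotIso_symm k1')
  have claim2 : ∀ j k, QuotIso (P (j + 1) (k + 1)) (P (j + 1) k) (P j (k + 2)) (P j (k + 1))
      (hPnorm (j + 1) k) (hPnorm j (k + 1)) := by
    intro j k
    have hker1 : f.ker ⊓ P j (k + 2) ≤ P j (k + 1) := by
      rw [hfker]
      simp only [hP]
      exact le_inf (le_trans inf_le_right inf_le_left)
        (le_trans inf_le_left (le_trans (hY0C k) le_sup_left))
    have hker2 : π.ker ⊓ P (j + 1) (k + 1) ≤ P (j + 1) k := by
      rw [hπker]
      exact le_trans inf_le_left (le_trans (hXle (by omega : 1 ≤ j + 1)) (hXleP (j + 1) k))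
    have k1 := quotIso_of_map f (P j (k + 2)) (P j (k + 1)) (hPnorm j (k + 1))
      (Subgroup.Normal.map (hPnorm j (k + 1)) f hfsurj) (hPmono j (k + 1)) hker1
    have k2 := quotIso_of_map π (P (j + 1) (k + 1)) (P (j + 1) k) (hPnorm (j + 1) k)
      (Subgroup.Normal.map (hPnorm (j + 1) k) π hπsurj) (hPmono (j + 1) k) hker2
    have k1' := quotIso_congr (h1' := hPnorm j (k + 1))
      (h2' := Subgroup.Normal.map (hPnorm (j + 1) k) π hπsurj)
      rfl rfl (hmapP j (k + 1)) (hmapP j k) k1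
    exact quotIso_trans k2 (quotIso_symm k1')
  -- telescoping
  have T1 : ∀ j k, QuotIso (X (j + 1)) (P j k) (X 1) (P 0 (k + j))
      (hPnorm j k) (hPnorm 0 (k + j)) := by
    intro j
    induction j with
    | zero => intro k; exact quotIso_refl _ _ _
    | succ j ih =>
      intro k
      have t := quotIso_trans (claim1 j k) (ih (k + 1))
      exact quotIso_congr rfl rfl rfl (by rw [show k + 1 + j = k + (j + 1) by omega]) t
  have T2 : ∀ j k, QuotIso (P j (k + 1)) (P j k) (P 0 (k + j + 1)) (P 0 (k + j))
      (hPnorm j k) (hPnorm 0 (k + j)) := by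
    intro j
    induction j with
    | zero => intro k; exact quotIso_refl _ _ _
    | succ j ih =>
      intro k
      have t := quotIso_trans (claim2 j k) (ih (k + 1))
      exact quotIso_congr rfl rfl (by rw [show k + 1 + j + 1 = k + (j + 1) + 1 by omega])
        (by rw [show k + 1 + j = k + (j + 1) by omega]) t
  -- the signature chain
  set Δ : ℕ → Subgroup G := fun k => X 1 ⊓ c k with hΔdef
  have hΔnorm : ∀ k, (Δ k).Normal := fun k => hinfnorm _ _ ‹(X 1).Normal› (hCnorm k)
  have hP0 : ∀ k, P 0 k = Δ k := by
    intro k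
    simp only [hP, hΔdef]
    rw [h.bot_eq, sup_bot_eq]
  have hΔ0 : Δ 0 = ⊥ := by
    simp only [hΔdef]; rw [hc0, inf_bot_eq]
  have hC1 : c 1 = Y0 := by
    rw [hcs 0, hc0, Subgroup.map_bot, MonoidHom.comap_bot, hfker]
  have hΔ1 : Δ 1 = X 1 ⊓ Y0 := by simp only [hΔdef]; rw [hC1]
  have hΔmono : ∀ k, Δ k ≤ Δ (k + 1) := fun k => inf_le_inf_left _ (hCmono k)
  have hΔleX1 : ∀ k, Δ k ≤ X 1 := fun _ => inf_le_left
  have hstarP : ∀ k, P k 1 = X k ⊔ (X (k + 1) ⊓ Y0) := by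
    intro k
    simp only [hP]
    rw [hC1, inf_comm (X (k + 1)), sup_comm Y0 (X k), ← aux_modular (h.mono k),
      inf_comm Y0 (X (k + 1))]
  have hinfnorm' : ∀ k, (X k ⊓ Y0).Normal := fun k => hinfnorm _ _ (h.norm k) ‹Y0.Normal›
  have hstarnorm : ∀ k, (X k ⊔ (X (k + 1) ⊓ Y0)).Normal := fun k =>
    hsupnorm _ _ (h.norm k) (hinfnorm' (k + 1))
  -- (i)
  have main_i : ∀ k, QuotIso (X (k + 1)) (X k) (X 1) (Δ k) (h.norm k) (hΔnorm k) := by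
    intro k
    exact quotIso_congr rfl (hPj0 k) rfl
      (by rw [show (0 : ℕ) + k = k by omega, hP0]) (T1 k 0)
  -- (ii)
  have main_ii : ∀ k, QuotIso (X (k + 1)) (X k ⊔ (X (k + 1) ⊓ Y0)) (X 1) (Δ (k + 1))
      (hstarnorm k) (hΔnorm (k + 1)) := by
    intro k
    exact quotIso_congr rfl (hstarP k) rfl
      (by rw [show (1 : ℕ) + k = k + 1 by omega, hP0]) (T1 k 1)
  -- (iii)
  have main_iii : ∀ k, QuotIso (X k ⊔ (X (k + 1) ⊓ Y0)) (X k) (Δ (k + 1)) (Δ k)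
      (h.norm k) (hΔnorm k) := by
    intro k
    exact quotIso_congr (hstarP k) (hPj0 k)
      (by rw [show (0 : ℕ) + k + 1 = k + 1 by omega, hP0])
      (by rw [show (0 : ℕ) + k = k by omega, hP0]) (T2 k 0)
  -- (v) via the second isomorphism theorem
  have main_v : ∀ k, QuotIso (Δ (k + 1)) (Δ k) (X (k + 1) ⊓ Y0) (X k ⊓ Y0)
      (hΔnorm k) (hinfnorm' k) := by
    intro k
    haveI := h.norm k
    have hmapXk : (X k).map (QuotientGroup.mk' (X k)) = ⊥ := by
      rw [Subgroup.map_eq_bot_iff, QuotientGroup.ker_mk']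
    have hmapinf : ((X k ⊓ Y0).map (QuotientGroup.mk' (X k))).Normal :=
      Subgroup.Normal.map (hinfnorm' k) _ (QuotientGroup.mk'_surjective _)
    have s1 := quotIso_of_map (QuotientGroup.mk' (X k)) (X k ⊔ (X (k + 1) ⊓ Y0)) (X k)
      (h.norm k) (Subgroup.Normal.map (h.norm k) _ (QuotientGroup.mk'_surjective _))
      le_sup_left (by rw [QuotientGroup.ker_mk']; exact inf_le_left)
    have s2 := quotIso_of_map (QuotientGroup.mk' (X k)) (X (k + 1) ⊓ Y0) (X k ⊓ Y0)
      (hinfnorm' k) hmapinf (inf_le_inf (h.mono k) le_rfl)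
      (by rw [QuotientGroup.ker_mk']
          exact le_inf inf_le_left (le_trans inf_le_right inf_le_right))
    have hmapstar : (X k ⊔ (X (k + 1) ⊓ Y0)).map (QuotientGroup.mk' (X k)) =
        (X (k + 1) ⊓ Y0).map (QuotientGroup.mk' (X k)) := by
      rw [Subgroup.map_sup, hmapXk, bot_sup_eq]
    have hmapinfbot : (X k ⊓ Y0).map (QuotientGroup.mk' (X k)) = (X k).map (QuotientGroup.mk' (X k)) := by
      rw [hmapXk, Subgroup.map_eq_bot_iff, QuotientGroup.ker_mk']
      exact inf_le_left
    have s1' := quotIso_congr (h1' := h.norm k)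
      (h2' := Subgroup.Normal.map (h.norm k) _ (QuotientGroup.mk'_surjective _))
      rfl rfl hmapstar rfl s1
    have s2' := quotIso_congr (h1' := hinfnorm' k)
      (h2' := Subgroup.Normal.map (h.norm k) _ (QuotientGroup.mk'_surjective _))
      rfl rfl rfl hmapinfbot s2
    exact quotIso_trans (quotIso_symm (main_iii k)) (quotIso_trans s1' (quotIso_symm s2'))
  -- (vi)
  have main_vi : ∀ k, Nat.card ↥(Δ k) = Nat.card ↥(X k ⊓ Y0) := by
    intro k
    induction k with
    | zero =>
      rw [hΔ0, h.bot_eq, bot_inf_eq]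
    | succ k ih =>
      have hmul := card_eq_of_quotIso (main_v k) (hΔmono k) (inf_le_inf (h.mono k) le_rfl)
      rw [ih] at hmul
      have hpos : 0 < Nat.card ↥(X k ⊓ Y0) := Nat.card_pos
      exact Nat.eq_of_mul_eq_mul_right hpos hmul
  -- the top of the chain
  have hΔtop : Δ (ℓ + 1) = X 1 := by
    have htopnorm : (⊤ : Subgroup G).Normal := ⟨fun n _ g => Subgroup.mem_top _⟩
    have e2 : P (ℓ + 1) 0 = (⊤ : Subgroup G) := by rw [hPj0, h.top_eq]
    have t2 : QuotIso (⊤ : Subgroup G) (⊤ : Subgroup G) (X 1) (Δ (ℓ + 1))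
        htopnorm (hΔnorm (ℓ + 1)) :=
      quotIso_congr (hXtop (ℓ + 1 + 1) (by omega)) e2 rfl
        (by rw [show (0 : ℕ) + (ℓ + 1) = ℓ + 1 by omega, hP0]) (T1 (ℓ + 1) 0)
    have hcard := card_eq_of_quotIso t2 le_rfl (hΔleX1 (ℓ + 1))
    have hpos : 0 < Nat.card ↥(⊤ : Subgroup G) := Nat.card_pos
    rw [mul_comm (Nat.card ↥(X 1))] at hcard
    have hΔcard : Nat.card ↥(Δ (ℓ + 1)) = Nat.card ↥(X 1) :=
      Nat.eq_of_mul_eq_mul_left hpos hcard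
    exact Subgroup.eq_of_le_of_card_ge (hΔleX1 (ℓ + 1)) (le_of_eq hΔcard.symm)
  refine ⟨Δ, hΔnorm, hstarnorm, hinfnorm', hΔ0, hΔtop, hΔmono, hΔleX1, hΔ1, ?_⟩
  intro k _
  exact ⟨main_i k, main_ii k, main_iii k, main_v k, main_vi (k + 1)⟩
end

section
/- Let G be a finite group with a shift structure ({X_j}, Y_0, φ) of depth ℓ. If X_0 is abelian, then the factor group X_{j+1}/X_j is abelian for every -1 ≤ j < ℓ, so the chain {X_j} is a solvable series and G is a solvable group. -/
open Pointwise


/-- Rows indexed as in the paper shifted by one: `X k` is the paper's `X_{k-1}`.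
`QuotComm A N hN` says the quotient group `A N / N` (image of `A` in `G/N`) is abelian. -/
def QuotComm {G : Type*} [Group G] (A N : Subgroup G) (hN : N.Normal) : Prop :=
  letI := hN
  ∀ a b : ↥(Subgroup.map (QuotientGroup.mk' N) A), a * b = b * a

/-- Key commutator lemma: commutators of `X (k+1)` lie in `X k`. -/
theorem shift_structure_commutator_mem {G : Type*} [Group G] [Finite G] (ℓ : ℕ)
    (X : ℕ → Subgroup G) (Y0 : Subgroup G) [Y0.Normal] [(X 1).Normal]
    (φ : (G ⧸ Y0) ≃* (G ⧸ X 1)) (h : IsShiftStructure ℓ X Y0 φ)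
    (habel : ∀ a b : ↥(X 1), a * b = b * a) :
    ∀ k ≤ ℓ, ∀ a ∈ X (k + 1), ∀ b ∈ X (k + 1), a * b * a⁻¹ * b⁻¹ ∈ X k := by
  have hmono : Monotone X := monotone_nat_of_le_succ h.mono
  intro k
  induction k with
  | zero =>
    intro _ a ha b hb
    have hab : a * b = b * a := congrArg Subtype.val (habel ⟨a, ha⟩ ⟨b, hb⟩)
    rw [h.bot_eq, Subgroup.mem_bot, hab]
    group
  | succ k ih =>
    intro hk a ha b hb
    have hkℓ : k ≤ ℓ := Nat.le_of_succ_le hk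
    -- pull `a` and `b` back through `φ`
    have pull : ∀ c ∈ X (k + 2), ∃ x ∈ X (k + 1),
        φ (QuotientGroup.mk' Y0 x) = QuotientGroup.mk' (X 1) c := by
      intro c hc
      have hc' : QuotientGroup.mk' (X 1) c ∈
          Subgroup.map (QuotientGroup.mk' (X 1)) (X (k + 1 + 1)) := ⟨c, hc, rfl⟩
      rw [← h.compat (k + 1) hk] at hc'
      obtain ⟨q, hq, hφq⟩ := hc'
      obtain ⟨s, hs, rfl⟩ := hq
      have hs' : s ∈ (X (k + 1) : Set G) * (Y0 : Set G) := by
        rw [← Subgroup.mul_normal]; exact hs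
      obtain ⟨x, hx, y, hy, rfl⟩ := hs'
      refine ⟨x, hx, ?_⟩
      have hy1 : (QuotientGroup.mk' Y0) y = 1 := (QuotientGroup.eq_one_iff y).mpr hy
      rw [← hφq, map_mul, hy1, mul_one]
      rfl
    obtain ⟨x, hx, hφx⟩ := pull a ha
    obtain ⟨y, hy, hφy⟩ := pull b hb
    -- the commutator of x, y lies in X k by induction hypothesis
    have hcomm : x * y * x⁻¹ * y⁻¹ ∈ X k := ih hkℓ x hx y hy
    have hmem : QuotientGroup.mk' Y0 (x * y * x⁻¹ * y⁻¹) ∈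
        Subgroup.map (QuotientGroup.mk' Y0) (X k ⊔ Y0) :=
      ⟨x * y * x⁻¹ * y⁻¹, Subgroup.mem_sup_left hcomm, rfl⟩
    have hmem2 : φ (QuotientGroup.mk' Y0 (x * y * x⁻¹ * y⁻¹)) ∈
        Subgroup.map (QuotientGroup.mk' (X 1)) (X (k + 1)) := by
      rw [← h.compat k hkℓ]
      exact ⟨_, hmem, rfl⟩
    have hφc : φ (QuotientGroup.mk' Y0 (x * y * x⁻¹ * y⁻¹)) =
        QuotientGroup.mk' (X 1) (a * b * a⁻¹ * b⁻¹) := by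
      simp only [map_mul, map_inv, hφx, hφy]
    rw [hφc] at hmem2
    obtain ⟨d, hd, hdeq⟩ := hmem2
    obtain ⟨z, hz, hdz⟩ := (QuotientGroup.mk'_eq_mk' (X 1)).mp hdeq
    have : a * b * a⁻¹ * b⁻¹ = d * z := hdz.symm
    rw [this]
    exact mul_mem hd (hmono (Nat.le_add_left 1 k) hz)

/-- if `X_0` is abelian, every factor group `X_{j+1}/X_j` of the chain is
abelian, so the chain is a solvable series and `G` is solvable. -/
theorem shift_structure_solvable_of_abelian {G : Type*} [Group G] [Finite G] (ℓ : ℕ)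
    (X : ℕ → Subgroup G) (Y0 : Subgroup G) [Y0.Normal] [(X 1).Normal]
    (φ : (G ⧸ Y0) ≃* (G ⧸ X 1)) (h : IsShiftStructure ℓ X Y0 φ)
    (habel : ∀ a b : ↥(X 1), a * b = b * a) :
    (∀ k ≤ ℓ, QuotComm (X (k + 1)) (X k) (h.norm k)) ∧ IsSolvable G := by
  have key := shift_structure_commutator_mem ℓ X Y0 φ h habel
  constructor
  · intro k hk
    letI := h.norm k
    intro a b
    obtain ⟨qa, hqa⟩ := a
    obtain ⟨qb, hqb⟩ := b
    rw [Subgroup.mem_map] at hqa hqb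
    obtain ⟨x, hx, rfl⟩ := hqa
    obtain ⟨y, hy, rfl⟩ := hqb
    apply Subtype.ext
    show QuotientGroup.mk' (X k) x * QuotientGroup.mk' (X k) y =
      QuotientGroup.mk' (X k) y * QuotientGroup.mk' (X k) x
    rw [← map_mul, ← map_mul]
    apply (QuotientGroup.mk'_eq_mk' (X k)).mpr
    refine ⟨(x * y)⁻¹ * (y * x), ?_, by group⟩
    have heq : (x * y)⁻¹ * (y * x) = y⁻¹ * x⁻¹ * (y⁻¹)⁻¹ * (x⁻¹)⁻¹ := by group
    rw [heq]
    exact key k hk y⁻¹ (inv_mem hy) x⁻¹ (inv_mem hx)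
  · have hcomm : ∀ j ≤ ℓ, ⁅X (j + 1), X (j + 1)⁆ ≤ X j := by
      intro j hj
      rw [Subgroup.commutator_le]
      intro g₁ hg₁ g₂ hg₂
      simpa [commutatorElement_def, mul_assoc] using key j hj g₁ hg₁ g₂ hg₂
    have hd : ∀ n ≤ ℓ + 1, derivedSeries G n ≤ X (ℓ + 1 - n) := by
      intro n
      induction n with
      | zero => intro _; rw [Nat.sub_zero, h.top_eq]; exact le_top
      | succ n ih =>
        intro hn
        have hnℓ : n ≤ ℓ := Nat.lt_succ_iff.mp hn
        have h1 : ℓ + 1 - n = (ℓ - n) + 1 := by omega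
        have h2 : ℓ + 1 - (n + 1) = ℓ - n := by omega
        rw [h2]
        calc derivedSeries G (n + 1) = ⁅derivedSeries G n, derivedSeries G n⁆ := rfl
          _ ≤ ⁅X (ℓ + 1 - n), X (ℓ + 1 - n)⁆ :=
              Subgroup.commutator_mono (ih (Nat.le_succ_of_le hnℓ)) (ih (Nat.le_succ_of_le hnℓ))
          _ ≤ X (ℓ - n) := by rw [h1]; exact hcomm (ℓ - n) (Nat.sub_le ℓ n)
    refine ⟨⟨ℓ + 1, ?_⟩⟩
    have := hd (ℓ + 1) le_rfl
    rw [Nat.sub_self, h.bot_eq] at this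
    exact le_bot_iff.mp this
end

section
/- Let G be a finite group with a shift structure ({X_j}, Y_0, φ) of depth ℓ. Then G is solvable if and only if the subgroup X_0 is solvable. -/
theorem Subgroup.isSolvable_of_ker_le {G G' : Type*} [Group G] [Group G'] (f : G →* G')
    {H : Subgroup G} (hker : f.ker ≤ H) [Group.IsSolvable f.ker] [Group.IsSolvable (H.map f)] :
    Group.IsSolvable H :=
  Group.isSolvable_of_ker_le_range (Subgroup.inclusion hker) (f.subgroupMap H) fun x hx =>
    ⟨⟨x, congrArg Subtype.val hx⟩, rfl⟩

theorem Subgroup.isSolvable_map {G G' : Type*} [Group G] [Group G'] (f : G →* G')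
    (H : Subgroup G) [Group.IsSolvable H] : Group.IsSolvable (H.map f) :=
  Group.isSolvable_of_surjective (f.subgroupMap_surjective H)

namespace IsShiftStructure

variable {G : Type*} [Group G] [Finite G] {ℓ : ℕ} {X : ℕ → Subgroup G} {Y0 : Subgroup G}
  [Y0.Normal] [(X 1).Normal] {φ : (G ⧸ Y0) ≃* (G ⧸ X 1)}

theorem isSolvable_map_succ (h : IsShiftStructure ℓ X Y0 φ) {j : ℕ} (hj : j ≤ ℓ)
    [Group.IsSolvable (X j)] : Group.IsSolvable ((X (j + 1)).map (QuotientGroup.mk' (X 1))) := by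
  have hsup : (X j ⊔ Y0).map (QuotientGroup.mk' Y0) = (X j).map (QuotientGroup.mk' Y0) := by
    rw [Subgroup.map_sup, QuotientGroup.map_mk'_self, sup_bot_eq]
  rw [← h.compat j hj, hsup]
  have := (X j).isSolvable_map (QuotientGroup.mk' Y0)
  exact Subgroup.isSolvable_map φ.toMonoidHom _

theorem isSolvable_succ (h : IsShiftStructure ℓ X Y0 φ) [Group.IsSolvable (X 1)] {j : ℕ}
    (hj : j ≤ ℓ) [Group.IsSolvable (X j)] : Group.IsSolvable (X (j + 1)) := by
  have hle : X 1 ≤ X (j + 1) := monotone_nat_of_le_succ h.mono (Nat.le_add_left 1 j)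
  have := h.isSolvable_map_succ hj
  have : Group.IsSolvable (QuotientGroup.mk' (X 1)).ker := by
    rw [QuotientGroup.ker_mk']
    infer_instance
  exact Subgroup.isSolvable_of_ker_le (QuotientGroup.mk' (X 1))
    ((QuotientGroup.ker_mk' (X 1)).le.trans hle)

theorem isSolvable_of_le (h : IsShiftStructure ℓ X Y0 φ) [Group.IsSolvable (X 1)] :
    ∀ j ≤ ℓ + 1, Group.IsSolvable (X j)
  | 0, _ => h.bot_eq ▸ inferInstance
  | j + 1, hj =>
    have := h.isSolvable_of_le j (by omega)
    h.isSolvable_succ (by omega)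

end IsShiftStructure

/-- a group with a shift structure is solvable iff `X_0` (here `X 1`,
indices being shifted by one) is solvable. -/
theorem shift_structure_solvable_iff {G : Type*} [Group G] [Finite G] (ℓ : ℕ)
    (X : ℕ → Subgroup G) (Y0 : Subgroup G) [Y0.Normal] [(X 1).Normal]
    (φ : (G ⧸ Y0) ≃* (G ⧸ X 1)) (h : IsShiftStructure ℓ X Y0 φ) :
    IsSolvable G ↔ IsSolvable ↥(X 1) := by
  change Group.IsSolvable G ↔ Group.IsSolvable (X 1)
  refine ⟨fun _ => inferInstance, fun _ => ?_⟩
  have : Group.IsSolvable (⊤ : Subgroup G) := h.top_eq ▸ h.isSolvable_of_le (ℓ + 1) le_rfl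
  exact Group.isSolvable_of_surjective (f := (⊤ : Subgroup G).subtype)
    fun g => ⟨⟨g, trivial⟩, rfl⟩
end

section
/- Let G be a finite group with a shift structure ({X_j}, Y_0, φ) of depth ℓ, and fix j with -1 ≤ j < ℓ - 1. Suppose X_{j+1} = Q^0 ≤ Q^1 ≤ ⋯ ≤ Q^p = X_{j+2} is a chain of subgroups with every Q^n normal in G. Then there exist subgroups P^0, P^1, …, P^p of G, each normal in G, with X_j ≤ X_j* = P^0 ≤ P^1 ≤ ⋯ ≤ P^p = X_{j+1}, such that P^n/P^m ≅ Q^n/Q^m for all 0 ≤ m ≤ n ≤ p, and such that φ maps the subgroup (P^n Y_0)/Y_0 of G/Y_0 onto the subgroup Q^n/X_0 of G/X_0 for every 0 ≤ n ≤ p. -/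
open scoped Pointwise

open QuotientGroup (mk' ker_mk' quotientKerEquivRange quotientMulEquivOfEq mk'_surjective)

namespace Subgroup

variable {G H : Type*} [Group G] [Group H]

theorem sup_inf_assoc_of_le_of_normal {A C : Subgroup G} (Y : Subgroup G) [Y.Normal]
    (h : A ≤ C) : (A ⊔ Y) ⊓ C = A ⊔ Y ⊓ C := by
  refine le_antisymm (fun x hx => ?_)
    (sup_le (le_inf le_sup_left h) (inf_le_inf_right C le_sup_right))
  have hx' : x ∈ (A : Set G) * ((Y ⊓ C : Subgroup G) : Set G) := by
    rw [mul_inf_assoc A Y C h, ← mul_normal]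
    exact hx
  obtain ⟨a, ha, y, hy, rfl⟩ := hx'
  exact mul_mem_sup ha hy

theorem map_inf_comap (f : G →* H) (A : Subgroup G) (S : Subgroup H) :
    (A ⊓ S.comap f).map f = A.map f ⊓ S :=
  le_antisymm ((map_inf_le _ _ f).trans (inf_le_inf_left _ (map_comap_le _ _)))
    (by rintro _ ⟨⟨x, hx, rfl⟩, hy⟩; exact ⟨x, ⟨hx, hy⟩, rfl⟩)

theorem nonempty_mulEquiv_map_of_ker_inf_eq {K₁ K₂ : Type*} [Group K₁] [Group K₂]
    (f : G →* K₁) (g : G →* K₂) (A : Subgroup G) (h : f.ker ⊓ A = g.ker ⊓ A) :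
    Nonempty (A.map f ≃* A.map g) := by
  have hker : (f.domRestrict A).ker = (g.domRestrict A).ker := by
    simpa only [MonoidHom.ker_domRestrict] using subgroupOf_inj.mpr h
  exact ⟨(MulEquiv.subgroupCongr (f.domRestrict_range (K := A))).symm.trans <|
    (quotientKerEquivRange _).symm.trans <| (quotientMulEquivOfEq hker).trans <|
    (quotientKerEquivRange _).trans (MulEquiv.subgroupCongr (g.domRestrict_range (K := A)))⟩

end Subgroup

open Subgroup

theorem quotIso_of_inf_comap_eq {G G' K : Type*} [Group G] [Group G'] [Group K]
    (θ : G →* K) (π : G' →* K) (T : Subgroup K) [T.Normal]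
    {A N : Subgroup G} {B M : Subgroup G'} (hN : N.Normal) (hM : M.Normal)
    (hA : T.comap θ ⊓ A = N ⊓ A) (hB : T.comap π ⊓ B = M ⊓ B) (hAB : A.map θ = B.map π) :
    QuotIso A N B M hN hM := by
  have hAB' : A.map ((mk' T).comp θ) = B.map ((mk' T).comp π) := by
    rw [← map_map, ← map_map, hAB]
  obtain ⟨eA⟩ := nonempty_mulEquiv_map_of_ker_inf_eq (mk' N) ((mk' T).comp θ) A
    (by rw [ker_mk', ← MonoidHom.comap_ker, ker_mk', hA])
  obtain ⟨eB⟩ := nonempty_mulEquiv_map_of_ker_inf_eq ((mk' T).comp π) (mk' M) B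
    (by rw [ker_mk', ← MonoidHom.comap_ker, ker_mk', hB])
  exact ⟨eA.trans ((MulEquiv.subgroupCongr hAB').trans eB)⟩

section ShiftTransfer

variable {G H : Type*} [Group G] [Group H] (θ π : G →* H) (C : Subgroup G)

def shiftTransfer (S : Subgroup G) : Subgroup G :=
  C ⊓ (S.map π).comap θ

variable {θ π C}

theorem shiftTransfer_mono {S T : Subgroup G} (hST : S ≤ T) :
    shiftTransfer θ π C S ≤ shiftTransfer θ π C T :=
  inf_le_inf_left C (comap_mono (map_mono hST))

theorem shiftTransfer_normal (hπ : Function.Surjective π) {S : Subgroup G} [C.Normal]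
    (hS : S.Normal) : (shiftTransfer θ π C S).Normal :=
  have := (hS.map π hπ).comap θ
  inferInstanceAs (C ⊓ _).Normal

theorem map_shiftTransfer {S : Subgroup G} (hS : S.map π ≤ C.map θ) :
    (shiftTransfer θ π C S).map θ = S.map π := by
  rw [shiftTransfer, map_inf_comap, inf_eq_right.mpr hS]

theorem shiftTransfer_eq_sup_ker_inf {A S : Subgroup G} (hAC : A ≤ C)
    (hS : S.map π = A.map θ) : shiftTransfer θ π C S = A ⊔ θ.ker ⊓ C := by
  rw [shiftTransfer, hS, comap_map_eq, inf_comm, sup_inf_assoc_of_le_of_normal _ hAC]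

theorem quotIso_shiftTransfer {S T : Subgroup G} (hπ : Function.Surjective π) (hST : S ≤ T)
    (hπS : π.ker ≤ S) (hT : T.map π ≤ C.map θ) (hN : (shiftTransfer θ π C S).Normal)
    (hSn : S.Normal) : QuotIso (shiftTransfer θ π C T) (shiftTransfer θ π C S) T S hN hSn := by
  have := hSn.map π hπ
  have hle := shiftTransfer_mono (θ := θ) (π := π) (C := C) hST
  refine quotIso_of_inf_comap_eq θ π (S.map π) hN hSn ?_ ?_ (map_shiftTransfer hT)
  · rw [inf_eq_left.mpr hle]
    unfold shiftTransfer
    rw [inf_left_comm, inf_eq_left.mpr (comap_mono (map_mono hST))]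
  · rw [comap_map_eq, sup_eq_left.mpr hπS]

end ShiftTransfer

namespace IsShiftStructure

variable {G : Type*} [Group G] [Finite G] {ℓ : ℕ} {X : ℕ → Subgroup G} {Y0 : Subgroup G}
  [Y0.Normal] [(X 1).Normal] {φ : (G ⧸ Y0) ≃* (G ⧸ X 1)}

theorem map_eq (h : IsShiftStructure ℓ X Y0 φ) {j : ℕ} (hj : j ≤ ℓ) :
    (X j).map (φ.toMonoidHom.comp (mk' Y0)) = (X (j + 1)).map (mk' (X 1)) := by
  rw [← h.compat j hj, Subgroup.map_sup, QuotientGroup.map_mk'_self, sup_bot_eq, map_map]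

end IsShiftStructure

/-- fix `j` with `-1 ≤ j < ℓ - 1` (here `i = j + 1 < ℓ`, indices shifted by
one).  Given a chain `X_{j+1} = Q^0 ≤ ⋯ ≤ Q^p = X_{j+2}` of subgroups normal in `G`,
there is a chain `X_j ≤ X_j* = P^0 ≤ ⋯ ≤ P^p = X_{j+1}` of subgroups normal in `G` with
`P^n/P^m ≅ Q^n/Q^m` for `0 ≤ m ≤ n ≤ p` and `φ((P^n Y_0)/Y_0) = Q^n/X_0` for
`0 ≤ n ≤ p`. -/
theorem shift_structure_chain_transfer {G : Type*} [Group G] [Finite G] (ℓ : ℕ)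
    (X : ℕ → Subgroup G) (Y0 : Subgroup G) [Y0.Normal] [(X 1).Normal]
    (φ : (G ⧸ Y0) ≃* (G ⧸ X 1)) (h : IsShiftStructure ℓ X Y0 φ)
    (i : ℕ) (hi : i < ℓ) (p : ℕ) (Q : ℕ → Subgroup G)
    (hQ0 : Q 0 = X (i + 1)) (hQp : Q p = X (i + 2))
    (hQmono : ∀ n < p, Q n ≤ Q (n + 1))
    (hQnorm : ∀ n ≤ p, (Q n).Normal) :
    ∃ P : ℕ → Subgroup G,
      ∃ hPnorm : ∀ n ≤ p, (P n).Normal,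
      P 0 = X i ⊔ (X (i + 1) ⊓ Y0) ∧
      X i ≤ P 0 ∧
      P p = X (i + 1) ∧
      (∀ n < p, P n ≤ P (n + 1)) ∧
      (∀ m n : ℕ, ∀ hmn : m ≤ n, ∀ hnp : n ≤ p,
        QuotIso (P n) (P m) (Q n) (Q m)
          (hPnorm m (hmn.trans hnp)) (hQnorm m (hmn.trans hnp))) ∧
      (∀ n ≤ p,
        Subgroup.map φ.toMonoidHom (Subgroup.map (QuotientGroup.mk' Y0) (P n ⊔ Y0)) =
          Subgroup.map (QuotientGroup.mk' (X 1)) (Q n)) := by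
  have := h.norm
  set θ : G →* G ⧸ X 1 := φ.toMonoidHom.comp (mk' Y0)
  set π : G →* G ⧸ X 1 := mk' (X 1)
  have hθ : θ.ker = Y0 := by rw [MonoidHom.ker_comp_of_injective _ _ φ.injective, ker_mk']
  have hQ : MonotoneOn Q (Set.Iic p) :=
    monotoneOn_of_le_add_one Set.ordConnected_Iic fun n _ _ hn => hQmono n hn
  have hπQ : ∀ n ≤ p, π.ker ≤ Q n := fun n hn => calc
    π.ker = X 1 := ker_mk' _
    _ ≤ X (i + 1) := monotone_nat_of_le_succ h.mono (Nat.le_add_left 1 i)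
    _ = Q 0 := hQ0.symm
    _ ≤ Q n := hQ (Nat.zero_le p) hn (Nat.zero_le n)
  have hQθ : ∀ n ≤ p, (Q n).map π ≤ (X (i + 1)).map θ := fun n hn => by
    rw [h.map_eq hi, ← hQp]
    exact map_mono (hQ hn Set.self_mem_Iic hn)
  have hP0 : shiftTransfer θ π (X (i + 1)) (Q 0) = X i ⊔ (X (i + 1) ⊓ Y0) := by
    rw [shiftTransfer_eq_sup_ker_inf (h.mono i) (hQ0 ▸ (h.map_eq hi.le).symm), hθ, inf_comm]
  have hPp : shiftTransfer θ π (X (i + 1)) (Q p) = X (i + 1) := by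
    rw [shiftTransfer_eq_sup_ker_inf le_rfl (hQp ▸ (h.map_eq hi).symm)]
    exact sup_eq_left.mpr inf_le_right
  refine ⟨fun n => shiftTransfer θ π (X (i + 1)) (Q n),
    fun n hn => shiftTransfer_normal (mk'_surjective _) (hQnorm n hn), hP0,
    le_sup_left.trans hP0.ge, hPp, fun n hn => shiftTransfer_mono (hQmono n hn),
    fun m n hmn hnp => quotIso_shiftTransfer (mk'_surjective _) (hQ (hmn.trans hnp) hnp hmn)
      (hπQ m (hmn.trans hnp)) (hQθ n hnp) _ _, fun n hn => ?_⟩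
  rw [Subgroup.map_sup, QuotientGroup.map_mk'_self, sup_bot_eq, map_map]
  exact map_shiftTransfer (hQθ n hn)
end

section
/- Let P be a finite group with subgroups W_1, W_2, W_3, each normal in P, such that W_i ∩ W_j = 1 and W_i W_j = P for every pair i ≠ j (a partial congruence partition with three normal components). Then P is abelian, P ≅ W_1 × W_2, and W_1 ≅ W_2 ≅ W_3. -/
/-!
Two disjoint normal subgroups commute elementwise. Hence each `Wᵢ` centralizes the other two,
which generate `P`, so `Wᵢ` is central and `P = W₁ ⊔ W₂` is abelian; commuting complementary
normal subgroups give `P ≅ W₁ × W₂`. Any two complements of a normal subgroup `N` are isomorphic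
to `P ⧸ N`, so `W₁ ≅ P ⧸ W₃ ≅ W₂` and `W₂ ≅ P ⧸ W₁ ≅ W₃`.
-/

namespace Subgroup

variable {G : Type*} [Group G]

theorem le_centralizer_of_disjoint {H K : Subgroup G} [H.Normal] [K.Normal]
    (h : Disjoint H K) : H ≤ centralizer K := fun x hx y hy =>
  commute_of_normal_of_disjoint K H ‹_› ‹_› h.symm y x hy hx

theorem le_center_of_disjoint_of_sup_eq_top {H K L : Subgroup G}
    [H.Normal] [K.Normal] [L.Normal] (hK : Disjoint H K) (hL : Disjoint H L)
    (hKL : K ⊔ L = ⊤) : H ≤ center G := by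
  rw [← SetLike.coe_subset_coe, ← centralizer_eq_top_iff_subset, eq_top_iff, ← hKL]
  exact sup_le (le_centralizer_of_disjoint hK.symm) (le_centralizer_of_disjoint hL.symm)

theorem isComplement'_of_isCompl {H K : Subgroup G} [K.Normal] (h : IsCompl H K) :
    H.IsComplement' K :=
  isComplement'_of_disjoint_and_mul_eq_univ h.disjoint
    (by rw [← mul_normal, h.sup_eq_top, coe_top])

noncomputable def prodMulEquivOfIsCompl {H K : Subgroup G} [H.Normal] [K.Normal]
    (h : IsCompl H K) : H × K ≃* G :=
  MulEquiv.ofBijective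
    (H.subtype.noncommCoprod K.subtype fun x y =>
      commute_of_normal_of_disjoint H K ‹_› ‹_› h.disjoint x y x.2 y.2)
    (isComplement'_of_isCompl h)

noncomputable def mulEquivOfIsCompl {H H' K : Subgroup G} [K.Normal]
    (h : IsCompl H K) (h' : IsCompl H' K) : H ≃* H' :=
  (isComplement'_of_isCompl h).QuotientMulEquiv.symm.trans
    (isComplement'_of_isCompl h').QuotientMulEquiv

end Subgroup

theorem pcp_three_normal_components_general {P : Type*} [Group P]
    (W1 W2 W3 : Subgroup P) [W1.Normal] [W2.Normal] [W3.Normal]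
    (h12 : W1 ⊓ W2 = ⊥) (h13 : W1 ⊓ W3 = ⊥) (h23 : W2 ⊓ W3 = ⊥)
    (j12 : W1 ⊔ W2 = ⊤) (j13 : W1 ⊔ W3 = ⊤) (j23 : W2 ⊔ W3 = ⊤) :
    (∀ a b : P, a * b = b * a) ∧
    Nonempty (P ≃* (↥W1 × ↥W2)) ∧
    Nonempty (↥W1 ≃* ↥W2) ∧ Nonempty (↥W2 ≃* ↥W3) := by
  have c12 : IsCompl W1 W2 := .of_eq h12 j12
  have c13 : IsCompl W1 W3 := .of_eq h13 j13
  have c23 : IsCompl W2 W3 := .of_eq h23 j23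
  have hW1 : W1 ≤ Subgroup.center P :=
    Subgroup.le_center_of_disjoint_of_sup_eq_top c12.disjoint c13.disjoint j23
  have hW2 : W2 ≤ Subgroup.center P :=
    Subgroup.le_center_of_disjoint_of_sup_eq_top c12.symm.disjoint c23.disjoint j13
  have hcenter : Subgroup.center P = ⊤ := top_le_iff.mp (j12 ▸ sup_le hW1 hW2)
  refine ⟨fun a b => ?_, ⟨(Subgroup.prodMulEquivOfIsCompl c12).symm⟩,
    ⟨Subgroup.mulEquivOfIsCompl c13 c23⟩, ⟨Subgroup.mulEquivOfIsCompl c12.symm c13.symm⟩⟩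
  exact Subgroup.mem_center_iff.mp (hcenter ▸ Subgroup.mem_top b) a

/-- Sprague: if a finite group `P` has three normal subgroups `W1, W2, W3`
which pairwise intersect trivially and pairwise generate `P`, then `P` is abelian,
`P ≅ W1 × W2`, and `W1 ≅ W2 ≅ W3`. -/
theorem pcp_three_normal_components {P : Type*} [Group P] [Finite P]
    (W1 W2 W3 : Subgroup P) [W1.Normal] [W2.Normal] [W3.Normal]
    (h12 : W1 ⊓ W2 = ⊥) (h13 : W1 ⊓ W3 = ⊥) (h23 : W2 ⊓ W3 = ⊥)
    (j12 : W1 ⊔ W2 = ⊤) (j13 : W1 ⊔ W3 = ⊤) (j23 : W2 ⊔ W3 = ⊤) :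
    (∀ a b : P, a * b = b * a) ∧
    Nonempty (P ≃* (↥W1 × ↥W2)) ∧
    Nonempty (↥W1 ≃* ↥W2) ∧ Nonempty (↥W2 ≃* ↥W3) :=
  pcp_three_normal_components_general W1 W2 W3 h12 h13 h23 j12 j13 j23
end

section
/- Let G be a finite group with a shift structure ({X_j}, Y_0, φ) of depth ℓ such that X_0 ∩ Y_0 = 1. Suppose there is a group A and a group homomorphism ω : G → A such that the subgroup K := (ker ω) ∩ (X_0 Y_0) satisfies K ∩ X_0 = 1, K ∩ Y_0 = 1, and K X_0 = K Y_0 = X_0 Y_0. Then X_0 ≅ Y_0 ≅ K, and the subgroups X_0, Y_0, and X_0 Y_0 are abelian. (This is the group-theoretic content of the theorem that the shift group of an ℓ-controllable Latin group code has X_0 ∩ Y_0 = 1 with X_0 ≅ Y_0 abelian.) -/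
/-- let `G` have a shift structure with `X_0 ∩ Y_0 = 1` (indices shifted by
one: `X 1` is the paper's `X_0`).  If there are a group `A` and a homomorphism
`ω : G → A` such that `K = ker ω ∩ (X_0 Y_0)` satisfies `K ∩ X_0 = 1`, `K ∩ Y_0 = 1`
and `K X_0 = K Y_0 = X_0 Y_0`, then `X_0 ≅ Y_0 ≅ K` and `X_0`, `Y_0`, `X_0 Y_0` are
abelian. -/
theorem latin_group_code_abelian {G : Type*} [Group G] [Finite G] (ℓ : ℕ)
    (X : ℕ → Subgroup G) (Y0 : Subgroup G) [Y0.Normal] [(X 1).Normal]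
    (φ : (G ⧸ Y0) ≃* (G ⧸ X 1)) (h : IsShiftStructure ℓ X Y0 φ)
    (hred : X 1 ⊓ Y0 = ⊥)
    (A : Type*) [Group A] (ω : G →* A) (K : Subgroup G)
    (hK : K = ω.ker ⊓ (X 1 ⊔ Y0))
    (hKX : K ⊓ X 1 = ⊥) (hKY : K ⊓ Y0 = ⊥)
    (hKX2 : K ⊔ X 1 = X 1 ⊔ Y0) (hKY2 : K ⊔ Y0 = X 1 ⊔ Y0) :
    Nonempty (↥(X 1) ≃* ↥Y0) ∧ Nonempty (↥Y0 ≃* ↥K) ∧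
    (∀ a b : ↥(X 1), a * b = b * a) ∧
    (∀ a b : ↥Y0, a * b = b * a) ∧
    (∀ a b : ↥(X 1 ⊔ Y0), a * b = b * a) := by
  haveI hKn : K.Normal := by rw [hK]; infer_instance
  have hKle : K ≤ X 1 ⊔ Y0 := by rw [hK]; exact inf_le_right
  have hcomm : ∀ x y : G, x ∈ X 1 → y ∈ Y0 → x * y = y * x := fun x y hx hy =>
    Subgroup.commute_of_normal_of_disjoint _ _ inferInstance inferInstance
      (disjoint_iff.2 hred) x y hx hy
  -- uniqueness of decomposition
  have huniq : ∀ (x x' : ↥(X 1)) (y y' : ↥Y0), (x : G) * y = x' * y' → x = x' ∧ y = y' := by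
    intro x x' y y' hxy
    have h1 : (x' : G)⁻¹ * x = y' * (y : G)⁻¹ := by
      have := congrArg (fun g => (x' : G)⁻¹ * g * (y : G)⁻¹) hxy
      simpa [mul_assoc] using this
    have hmem : (x' : G)⁻¹ * x ∈ X 1 ⊓ Y0 :=
      Subgroup.mem_inf.2 ⟨mul_mem (inv_mem x'.2) x.2,
        by rw [h1]; exact mul_mem y'.2 (inv_mem y.2)⟩
    rw [hred, Subgroup.mem_bot] at hmem
    have hx : x = x' := Subtype.ext ((inv_mul_eq_one.mp hmem).symm)
    refine ⟨hx, ?_⟩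
    have hcan : (x : G) * y = x * y' := by rw [hxy, hx]
    exact Subtype.ext (mul_left_cancel hcan)
  -- decomposition of elements of K
  have hdecomp : ∀ k : K, ∃ x : ↥(X 1), ∃ y : ↥Y0, (k : G) = x * y := by
    intro k
    have hm : (k : G) ∈ (↑(X 1 ⊔ Y0) : Set G) := hKle k.2
    rw [Subgroup.normal_mul] at hm
    obtain ⟨x, hx, y, hy, hxy⟩ := hm
    exact ⟨⟨x, hx⟩, ⟨y, hy⟩, hxy.symm⟩
  choose f g hfg using hdecomp
  -- f and g are homomorphisms
  have hfmul : ∀ k k' : K, f (k * k') = f k * f k' ∧ g (k * k') = g k * g k' := by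
    intro k k'
    have hc : Commute ((g k : G)) ((f k' : G)) := (hcomm _ _ (f k').2 (g k).2).symm
    have key : ((f (k * k') : G)) * ((g (k * k') : G)) =
        ((f k * f k' : ↥(X 1)) : G) * ((g k * g k' : ↥Y0) : G) := by
      rw [← hfg (k * k')]
      simp only [MulMemClass.coe_mul]
      rw [hfg k, hfg k']
      exact hc.mul_mul_mul_comm (f k : G) (g k' : G)
    obtain ⟨h1, h2⟩ := huniq _ _ _ _ key
    exact ⟨h1, h2⟩
  let πX : K →* ↥(X 1) := MonoidHom.mk' f (fun k k' => (hfmul k k').1)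
  let πY : K →* ↥Y0 := MonoidHom.mk' g (fun k k' => (hfmul k k').2)
  have hXinj : Function.Injective πX := by
    rw [← MonoidHom.ker_eq_bot_iff, eq_bot_iff]
    intro k hk
    rw [MonoidHom.mem_ker] at hk
    have hfk1 : (f k : G) = 1 := by exact_mod_cast congrArg Subtype.val hk
    have hgk : (k : G) = g k := by rw [hfg k, hfk1, one_mul]
    have hm : (k : G) ∈ K ⊓ Y0 := ⟨k.2, hgk ▸ (g k).2⟩
    rw [hKY, Subgroup.mem_bot] at hm
    exact Subgroup.mem_bot.2 (Subtype.ext hm)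
  have hYinj : Function.Injective πY := by
    rw [← MonoidHom.ker_eq_bot_iff, eq_bot_iff]
    intro k hk
    rw [MonoidHom.mem_ker] at hk
    have hgk1 : (g k : G) = 1 := by exact_mod_cast congrArg Subtype.val hk
    have hfk : (k : G) = f k := by rw [hfg k, hgk1, mul_one]
    have hm : (k : G) ∈ K ⊓ X 1 := ⟨k.2, hfk ▸ (f k).2⟩
    rw [hKX, Subgroup.mem_bot] at hm
    exact Subgroup.mem_bot.2 (Subtype.ext hm)
  have hXsurj : Function.Surjective πX := by
    intro x
    have hx : (x : G) ∈ (↑(K ⊔ Y0) : Set G) := by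
      rw [hKY2]; exact (le_sup_left : X 1 ≤ X 1 ⊔ Y0) x.2
    rw [Subgroup.normal_mul] at hx
    obtain ⟨k, hk, y, hy, hky⟩ := hx
    refine ⟨⟨k, hk⟩, ?_⟩
    have hkeq : k = (x : G) * y⁻¹ := eq_mul_inv_of_mul_eq hky
    exact (huniq (f ⟨k, hk⟩) x (g ⟨k, hk⟩) (⟨y, hy⟩ : ↥Y0)⁻¹
      (by rw [← hfg ⟨k, hk⟩]; exact hkeq)).1
  have hYsurj : Function.Surjective πY := by
    intro y
    have hy : (y : G) ∈ (↑(K ⊔ X 1) : Set G) := by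
      rw [hKX2]; exact (le_sup_right : Y0 ≤ X 1 ⊔ Y0) y.2
    rw [Subgroup.normal_mul] at hy
    obtain ⟨k, hk, x, hx, hkx⟩ := hy
    refine ⟨⟨k, hk⟩, ?_⟩
    have hkeq : k = x⁻¹ * (y : G) := by
      have h1 : k = (y : G) * x⁻¹ := eq_mul_inv_of_mul_eq hkx
      rw [h1]; exact (hcomm _ _ (inv_mem hx) y.2).symm
    exact (huniq (f ⟨k, hk⟩) (⟨x, hx⟩ : ↥(X 1))⁻¹ (g ⟨k, hk⟩) y
      (by rw [← hfg ⟨k, hk⟩]; exact hkeq)).2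
  let eX : K ≃* ↥(X 1) := MulEquiv.ofBijective πX ⟨hXinj, hXsurj⟩
  let eY : K ≃* ↥Y0 := MulEquiv.ofBijective πY ⟨hYinj, hYsurj⟩
  -- conjugation fixes f-values / g-values
  have hconjX : ∀ (b : ↥(X 1)) (k : K), (b : G) * (f k : G) * (b : G)⁻¹ = f k := by
    intro b k
    have hmem : (b : G) * (k : G) * (b : G)⁻¹ ∈ K := hKn.conj_mem _ k.2 (b : G)
    set k₂ : K := ⟨(b : G) * (k : G) * (b : G)⁻¹, hmem⟩ with hk₂def
    have hmemX : (b : G) * (f k : G) * (b : G)⁻¹ ∈ X 1 :=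
      (inferInstance : (X 1).Normal).conj_mem _ (f k).2 (b : G)
    have hdecomp2 : (k₂ : G) = ((⟨(b : G) * (f k : G) * (b : G)⁻¹, hmemX⟩ : ↥(X 1)) : G) * (g k : G) := by
      show (b : G) * (k : G) * (b : G)⁻¹ = (b : G) * (f k : G) * (b : G)⁻¹ * (g k : G)
      rw [hfg k, ← mul_assoc, mul_assoc ((b : G) * (f k : G)),
        ← hcomm _ _ (inv_mem b.2) (g k).2, ← mul_assoc]
    obtain ⟨h1, h2⟩ := huniq _ _ _ _ ((hfg k₂).symm.trans hdecomp2)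
    have hk₂ : k₂ = k := hYinj (show πY k₂ = πY k from h2)
    have hfin : (⟨(b : G) * (f k : G) * (b : G)⁻¹, hmemX⟩ : ↥(X 1)) = f k :=
      h1.symm.trans (congrArg f hk₂)
    exact congrArg Subtype.val hfin
  have hconjY : ∀ (b : ↥Y0) (k : K), (b : G) * (g k : G) * (b : G)⁻¹ = g k := by
    intro b k
    have hmem : (b : G) * (k : G) * (b : G)⁻¹ ∈ K := hKn.conj_mem _ k.2 (b : G)
    set k₂ : K := ⟨(b : G) * (k : G) * (b : G)⁻¹, hmem⟩ with hk₂def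
    have hmemY : (b : G) * (g k : G) * (b : G)⁻¹ ∈ Y0 :=
      (inferInstance : Y0.Normal).conj_mem _ (g k).2 (b : G)
    have hdecomp2 : (k₂ : G) = (f k : G) * ((⟨(b : G) * (g k : G) * (b : G)⁻¹, hmemY⟩ : ↥Y0) : G) := by
      show (b : G) * (k : G) * (b : G)⁻¹ = (f k : G) * ((b : G) * (g k : G) * (b : G)⁻¹)
      rw [hfg k, ← mul_assoc, ← hcomm _ _ (f k).2 b.2, mul_assoc ((f k : G)), mul_assoc]
    obtain ⟨h1, h2⟩ := huniq _ _ _ _ ((hfg k₂).symm.trans hdecomp2)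
    have hk₂ : k₂ = k := hXinj (show πX k₂ = πX k from h1)
    have hfin : (⟨(b : G) * (g k : G) * (b : G)⁻¹, hmemY⟩ : ↥Y0) = g k :=
      h2.symm.trans (congrArg g hk₂)
    exact congrArg Subtype.val hfin
  have habX : ∀ a b : ↥(X 1), a * b = b * a := by
    intro a b
    obtain ⟨k, hk⟩ := hXsurj a
    subst hk
    refine Subtype.ext ?_
    show (f k : G) * b = (b : G) * f k
    have hcj := hconjX b k
    calc (f k : G) * b = ((b : G) * f k * (b : G)⁻¹) * b := by rw [hcj]
      _ = (b : G) * f k := by group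
  have habY : ∀ a b : ↥Y0, a * b = b * a := by
    intro a b
    obtain ⟨k, hk⟩ := hYsurj a
    subst hk
    refine Subtype.ext ?_
    show (g k : G) * b = (b : G) * g k
    have hcj := hconjY b k
    calc (g k : G) * b = ((b : G) * g k * (b : G)⁻¹) * b := by rw [hcj]
      _ = (b : G) * g k := by group
  have habXY : ∀ a b : ↥(X 1 ⊔ Y0), a * b = b * a := by
    have key : ∀ a b : G, a ∈ X 1 ⊔ Y0 → b ∈ X 1 ⊔ Y0 → a * b = b * a := by
      intro a b ha hb
      rw [← SetLike.mem_coe, Subgroup.normal_mul] at ha hb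
      obtain ⟨x, hx, y, hy, rfl⟩ := ha
      obtain ⟨x', hx', y', hy', rfl⟩ := hb
      have cxx : x * x' = x' * x := congrArg Subtype.val (habX ⟨x, hx⟩ ⟨x', hx'⟩)
      have cyy : y * y' = y' * y := congrArg Subtype.val (habY ⟨y, hy⟩ ⟨y', hy'⟩)
      have hc1 : Commute y x' := (hcomm x' y hx' hy).symm
      have hc2 : Commute y' x := (hcomm x y' hx hy').symm
      calc x * y * (x' * y') = x * x' * (y * y') := hc1.mul_mul_mul_comm x y'
        _ = x' * x * (y' * y) := by rw [cxx, cyy]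
        _ = x' * y' * (x * y) := (hc2.mul_mul_mul_comm x' y).symm
    intro a b
    exact Subtype.ext (key _ _ a.2 b.2)
  exact ⟨⟨eX.symm.trans eY⟩, ⟨eY.symm⟩, habX, habY, habXY⟩
end

section
/- Let G be a finite group with a shift structure ({X_j}, Y_0, φ) of depth ℓ. If the order of X_0 is a power of 2, then the order of G is a power of 2, i.e., G is a 2-group. (This is the group-theoretic content of the theorem that in an ℓ-controllable bit-oriented Latin group code, G is a 2-group.) -/
/-- Lagrange-type counting: if `N ≤ K` with `N` normal in `G`, then
`|K| = |K/(N)| * |N|` where the quotient is realized as the image of `K` in `G ⧸ N`. -/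
lemma card_map_mk'_s13 {G : Type*} [Group G] [Finite G] (N K : Subgroup G) [N.Normal]
    (hNK : N ≤ K) :
    Nat.card ↥K = Nat.card ↥(Subgroup.map (QuotientGroup.mk' N) K) * Nat.card ↥N := by
  set f := (QuotientGroup.mk' N).comp K.subtype with hf
  have hker : f.ker = N.subgroupOf K := by
    rw [hf, ← MonoidHom.comap_ker, QuotientGroup.ker_mk', Subgroup.comap_subtype]
  have hrange : f.range = Subgroup.map (QuotientGroup.mk' N) K := by
    rw [hf, MonoidHom.range_comp, Subgroup.range_subtype]
  have e1 : (↥K ⧸ f.ker) ≃ ↥(Subgroup.map (QuotientGroup.mk' N) K) :=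
    (QuotientGroup.quotientKerEquivRange f).toEquiv.trans (Equiv.setCongr (by rw [hrange]))
  have e2 : ↥f.ker ≃ ↥N := by
    rw [hker]; exact (Subgroup.subgroupOfEquivOfLe hNK).toEquiv
  calc Nat.card ↥K = Nat.card (↥K ⧸ f.ker) * Nat.card ↥f.ker :=
        Subgroup.card_eq_card_quotient_mul_card_subgroup f.ker
    _ = _ := by rw [Nat.card_congr e1, Nat.card_congr e2]

/-- if `|X_0|` (here `X 1`, indices being shifted by one) is a power of 2,
then `|G|` is a power of 2, i.e. `G` is a 2-group. -/
theorem shift_structure_two_group {G : Type*} [Group G] [Finite G] (ℓ : ℕ)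
    (X : ℕ → Subgroup G) (Y0 : Subgroup G) [Y0.Normal] [(X 1).Normal]
    (φ : (G ⧸ Y0) ≃* (G ⧸ X 1)) (h : IsShiftStructure ℓ X Y0 φ)
    (hcard : ∃ n : ℕ, Nat.card ↥(X 1) = 2 ^ n) :
    ∃ m : ℕ, Nat.card G = 2 ^ m := by
  obtain ⟨n, hn⟩ := hcard
  have hmono : ∀ i j, i ≤ j → X i ≤ X j := by
    intro i j hij
    induction j with
    | zero => have : i = 0 := by omega
              subst this; exact le_rfl
    | succ k ih =>
      rcases Nat.eq_or_lt_of_le hij with rfl | hlt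
      · exact le_rfl
      · exact (ih (by omega)).trans (h.mono k)
  have key : ∀ j ≤ ℓ + 1, Nat.card ↥(X j) ∣ 2 ^ (n * j) := by
    intro j
    induction j with
    | zero => intro _; rw [h.bot_eq]; simp
    | succ k ih =>
      intro hk
      have hk' : k ≤ ℓ := by omega
      have hX1 : X 1 ≤ X (k + 1) := hmono 1 (k + 1) (by omega)
      have hcardeq := card_map_mk'_s13 (X 1) (X (k + 1)) hX1
      have hcompat := h.compat k hk'
      have himg : Subgroup.map (QuotientGroup.mk' Y0) (X k ⊔ Y0)
          = Subgroup.map (QuotientGroup.mk' Y0) (X k) := by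
        rw [Subgroup.map_sup, QuotientGroup.map_mk'_self, sup_bot_eq]
      have hcard1 : Nat.card ↥(Subgroup.map (QuotientGroup.mk' (X 1)) (X (k + 1)))
          = Nat.card ↥(Subgroup.map (QuotientGroup.mk' Y0) (X k)) := by
        rw [← hcompat, himg]
        exact (Nat.card_congr (Subgroup.equivMapOfInjective _ φ.toMonoidHom
          φ.injective).toEquiv).symm
      have hdvd : Nat.card ↥(Subgroup.map (QuotientGroup.mk' Y0) (X k)) ∣ Nat.card ↥(X k) :=
        Subgroup.card_dvd_of_surjective _ ((QuotientGroup.mk' Y0).subgroupMap_surjective (X k))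
      have hih := ih (by omega)
      rw [hcardeq, hcard1, hn]
      calc Nat.card ↥(Subgroup.map (QuotientGroup.mk' Y0) (X k)) * 2 ^ n
          ∣ 2 ^ (n * k) * 2 ^ n := Nat.mul_dvd_mul (hdvd.trans hih) dvd_rfl
        _ = 2 ^ (n * (k + 1)) := by ring
  have hG : Nat.card G ∣ 2 ^ (n * (ℓ + 1)) := by
    have := key (ℓ + 1) le_rfl
    rwa [h.top_eq, Subgroup.card_top] at this
  obtain ⟨m, _, hm⟩ := (Nat.dvd_prime_pow Nat.prime_two).mp hG
  exact ⟨m, hm⟩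
end

section
/- Let G be a finite group with a shift structure ({X_j}, Y_0, φ) of depth ℓ, and let N := X_0 ∩ Y_0 (a normal subgroup of G). Then the quotient group G/N has a shift structure of depth ℓ whose chain consists of the images of the X_j under the projection π : G → G/N, whose distinguished normal subgroup is π(Y_0), and whose isomorphism is the one induced by φ via the canonical identifications (G/N)/π(Y_0) ≅ G/Y_0 and (G/N)/π(X_0) ≅ G/X_0; moreover this shift structure is reduced, i.e., π(X_0) ∩ π(Y_0) = 1. Hence every shift group with |X_0 ∩ Y_0| > 1 is an extension of X_0 ∩ Y_0 by a shift group with trivial intersection. -/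
/-- Conclusion of STATEMENT 14: writing `N = X_0 ∩ Y_0` and `π : G → G/N` for the
projection, the quotient `G/N` carries a shift structure of depth `ℓ` with chain
`π(X j)`, normal subgroup `π(Y_0)`, and isomorphism `ψ` induced by `φ` (i.e. whenever
`φ(g Y_0) = g' X_0` one has `ψ(π(g) π(Y_0)) = π(g') π(X_0)`); moreover it is reduced:
`π(X_0) ∩ π(Y_0) = 1`. -/
def QuotientShiftConcl {G : Type*} [Group G] [Finite G] (ℓ : ℕ)
    (X : ℕ → Subgroup G) (Y0 : Subgroup G) [hY : Y0.Normal] [hX : (X 1).Normal]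
    (φ : (G ⧸ Y0) ≃* (G ⧸ X 1)) (hN : (X 1 ⊓ Y0).Normal) : Prop :=
  letI := hN
  haveI h1 : (Subgroup.map (QuotientGroup.mk' (X 1 ⊓ Y0)) Y0).Normal :=
    hY.map _ (QuotientGroup.mk'_surjective _)
  haveI h2 : (Subgroup.map (QuotientGroup.mk' (X 1 ⊓ Y0)) (X 1)).Normal :=
    hX.map _ (QuotientGroup.mk'_surjective _)
  Subgroup.map (QuotientGroup.mk' (X 1 ⊓ Y0)) (X 1) ⊓
      Subgroup.map (QuotientGroup.mk' (X 1 ⊓ Y0)) Y0 = ⊥ ∧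
  ∃ ψ : ((G ⧸ (X 1 ⊓ Y0)) ⧸ Subgroup.map (QuotientGroup.mk' (X 1 ⊓ Y0)) Y0) ≃*
        ((G ⧸ (X 1 ⊓ Y0)) ⧸ Subgroup.map (QuotientGroup.mk' (X 1 ⊓ Y0)) (X 1)),
    (∀ g g' : G, φ (QuotientGroup.mk g) = (QuotientGroup.mk g' : G ⧸ X 1) →
      ψ (QuotientGroup.mk (QuotientGroup.mk' (X 1 ⊓ Y0) g)) =
        QuotientGroup.mk (QuotientGroup.mk' (X 1 ⊓ Y0) g')) ∧
    IsShiftStructure ℓ (fun j => Subgroup.map (QuotientGroup.mk' (X 1 ⊓ Y0)) (X j))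
      (Subgroup.map (QuotientGroup.mk' (X 1 ⊓ Y0)) Y0) ψ

/-! Write `π : G → G/N` for `N = X₀ ∩ Y₀`. Since `ker π = N ≤ Y₀`, we get
`π(X₀) ∩ π(Y₀) = π(N) = 1`. By the third isomorphism theorem `(G/N)/π(Y₀) ≃ G/Y₀` and
`(G/N)/π(X₀) ≃ G/X₀`, and these identifications send `π(H)/π(Y₀)` to `HY₀/Y₀` and
`π(K)/π(X₀)` to `KX₀/X₀`; conjugating `φ` by them therefore carries every compatibility
condition of the shift structure on `G` over to `G/N`. -/

open QuotientGroup

namespace Subgroup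

variable {G H : Type*} [Group G] [Group H]

theorem map_inf_of_ker_le (f : G →* H) {A B : Subgroup G} (hB : f.ker ≤ B) :
    map f (A ⊓ B) = map f A ⊓ map f B := by
  refine le_antisymm (map_inf_le A B f) ?_
  rintro _ ⟨⟨a, ha, rfl⟩, hb⟩
  have haB : a ∈ comap f (map f B) := hb
  rw [comap_map_eq, sup_of_le_left hB] at haB
  exact ⟨a, ⟨ha, haB⟩, rfl⟩

end Subgroup

namespace QuotientGroup

variable {G : Type*} [Group G]

theorem map_mk'_inf_map_mk'_eq_bot (A B : Subgroup G) [(A ⊓ B).Normal] :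
    A.map (mk' (A ⊓ B)) ⊓ B.map (mk' (A ⊓ B)) = ⊥ := by
  rw [← Subgroup.map_inf_of_ker_le _ (by rw [ker_mk']; exact inf_le_right),
    Subgroup.map_eq_bot_iff, ker_mk']

variable (N : Subgroup G) [N.Normal]

theorem quotientQuotientEquivQuotient_comp_mk'_comp_mk' {M : Subgroup G} [M.Normal]
    (hNM : N ≤ M) :
    (quotientQuotientEquivQuotient N M hNM).toMonoidHom.comp
      ((mk' (M.map (mk' N))).comp (mk' N)) = mk' M :=
  rfl

theorem mk'_comp_mk'_eq_quotientQuotientEquivQuotient_symm_comp {M : Subgroup G} [M.Normal]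
    (hNM : N ≤ M) :
    (mk' (M.map (mk' N))).comp (mk' N) =
      (quotientQuotientEquivQuotient N M hNM).symm.toMonoidHom.comp (mk' M) := by
  ext g
  exact ((quotientQuotientEquivQuotient N M hNM).eq_symm_apply).2 rfl

variable {A B : Subgroup G} [A.Normal] [B.Normal]

def quotientMulEquivOfLE (hA : N ≤ A) (hB : N ≤ B) (φ : G ⧸ A ≃* G ⧸ B) :
    (G ⧸ N) ⧸ A.map (mk' N) ≃* (G ⧸ N) ⧸ B.map (mk' N) :=
  (quotientQuotientEquivQuotient N A hA).trans
    (φ.trans (quotientQuotientEquivQuotient N B hB).symm)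

theorem quotientMulEquivOfLE_mk_mk (hA : N ≤ A) (hB : N ≤ B) (φ : G ⧸ A ≃* G ⧸ B)
    {g g' : G} (h : φ (g : G ⧸ A) = (g' : G ⧸ B)) :
    quotientMulEquivOfLE N hA hB φ (mk (mk' N g)) = mk (mk' N g') := by
  calc quotientMulEquivOfLE N hA hB φ (mk (mk' N g))
      = (quotientQuotientEquivQuotient N B hB).symm (φ g) := rfl
    _ = mk (mk' N g') := by
      rw [h]
      exact (DFunLike.congr_fun
        (mk'_comp_mk'_eq_quotientQuotientEquivQuotient_symm_comp N hB) g').symm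

theorem map_quotientMulEquivOfLE (hA : N ≤ A) (hB : N ≤ B) (φ : G ⧸ A ≃* G ⧸ B)
    {H K : Subgroup G} (h : (H.map (mk' A)).map φ.toMonoidHom = K.map (mk' B)) :
    ((H.map (mk' N)).map (mk' (A.map (mk' N)))).map
        (quotientMulEquivOfLE N hA hB φ).toMonoidHom =
      (K.map (mk' N)).map (mk' (B.map (mk' N))) := by
  have hψ : (quotientMulEquivOfLE N hA hB φ).toMonoidHom.comp
      ((mk' (A.map (mk' N))).comp (mk' N)) =
      (quotientQuotientEquivQuotient N B hB).symm.toMonoidHom.comp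
        (φ.toMonoidHom.comp (mk' A)) := by
    rw [← quotientQuotientEquivQuotient_comp_mk'_comp_mk' N hA]
    rfl
  simp only [Subgroup.map_map]
  rw [hψ, mk'_comp_mk'_eq_quotientQuotientEquivQuotient_symm_comp N hB, ← Subgroup.map_map,
    ← Subgroup.map_map, ← Subgroup.map_map, h]

end QuotientGroup

theorem IsShiftStructure.quotient {G : Type*} [Group G] [Finite G] {ℓ : ℕ}
    {X : ℕ → Subgroup G} {Y0 : Subgroup G} [Y0.Normal] [(X 1).Normal]
    {φ : (G ⧸ Y0) ≃* (G ⧸ X 1)} (h : IsShiftStructure ℓ X Y0 φ)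
    (N : Subgroup G) [N.Normal] (hNX : N ≤ X 1) (hNY : N ≤ Y0) :
    IsShiftStructure ℓ (fun j => (X j).map (mk' N)) (Y0.map (mk' N))
      (quotientMulEquivOfLE N hNY hNX φ) where
  one_le := h.one_le
  bot_eq := by rw [h.bot_eq, Subgroup.map_bot]
  top_eq := by rw [h.top_eq, Subgroup.map_top_of_surjective _ (mk'_surjective N)]
  mono j := Subgroup.map_mono (h.mono j)
  norm j := (h.norm j).map _ (mk'_surjective N)
  compat j hj := by
    rw [← Subgroup.map_sup]
    exact map_quotientMulEquivOfLE N hNY hNX φ (h.compat j hj)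

/-- for `N = X_0 ∩ Y_0` (a normal subgroup of `G`), the quotient `G/N`
has a reduced shift structure of depth `ℓ` induced by the one of `G`. -/
theorem shift_structure_reduction {G : Type*} [Group G] [Finite G] (ℓ : ℕ)
    (X : ℕ → Subgroup G) (Y0 : Subgroup G) [Y0.Normal] [(X 1).Normal]
    (φ : (G ⧸ Y0) ≃* (G ⧸ X 1)) (h : IsShiftStructure ℓ X Y0 φ) :
    ∃ hN : (X 1 ⊓ Y0).Normal, QuotientShiftConcl ℓ X Y0 φ hN :=
  ⟨inferInstance, map_mk'_inf_map_mk'_eq_bot (X 1) Y0,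
    quotientMulEquivOfLE _ inf_le_right inf_le_left φ,
    fun _ _ => quotientMulEquivOfLE_mk_mk _ inf_le_right inf_le_left φ,
    h.quotient _ inf_le_left inf_le_right⟩
end
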